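/- arXiv:1210.2352 — 3 statements merged into one kernel-verified Lean document; each statement's English description precedes it below -/
import Mathlib

section
/- In a locally finite path-connected metric space (X,d), the radius R_x of the smallest closed ball centered at x containing at least two points is independent of x; i.e., R_x = R_y for all x,y ∈ X. -/
open Metric Set Bornology

/-- The radius of the smallest closed ball centered at `x` containing at least two points. -/
noncomputable def rad {X : Type*} [MetricSpace X] (x : X) : ℝ :=
  sInf {r : ℝ | (Metric.closedBall x r).Nontrivial}

/-- `dN1 x`: the smallest closed ball centered at `x` containing at least two points. -/
noncomputable def dN1 {X : Type*} [MetricSpace X] (x : X) : Set X :=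
  Metric.closedBall x (rad x)

/-- A finite sequence `c 0, ..., c n` is a continuous path if consecutive points lie in each
other's smallest nontrivial closed balls. -/
def IsContPath {X : Type*} [MetricSpace X] (c : ℕ → X) (n : ℕ) : Prop :=
  ∀ i < n, c (i + 1) ∈ dN1 (c i) ∧ c i ∈ dN1 (c (i + 1))

/-- Two points are joined if there is a continuous path between them. -/
def PathJoined {X : Type*} [MetricSpace X] (a b : X) : Prop :=
  ∃ (n : ℕ) (c : ℕ → X), IsContPath c n ∧ c 0 = a ∧ c n = b

lemma rad_bddBelow {X : Type*} [MetricSpace X] (x : X) :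
    BddBelow {r : ℝ | (Metric.closedBall x r).Nontrivial} := by
  refine ⟨0, fun r hr => ?_⟩
  rcases hr with ⟨a, ha, -⟩
  exact (Metric.nonempty_closedBall.mp ⟨a, ha⟩)

lemma rad_eq_dist {X : Type*} [MetricSpace X] {x y : X} (hxy : x ≠ y)
    (h1 : y ∈ dN1 x) : rad x = dist x y := by
  have hge : dist x y ≤ rad x := by
    have := h1
    simp only [dN1, Metric.mem_closedBall] at this
    rwa [dist_comm] at this
  have hle : rad x ≤ dist x y := by
    apply csInf_le (rad_bddBelow x)
    refine ⟨y, ?_, x, ?_, fun h => hxy h.symm⟩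
    · simp [Metric.mem_closedBall, dist_comm]
    · simp [Metric.mem_closedBall, dist_nonneg]
  linarith

lemma rad_eq_of_step {X : Type*} [MetricSpace X] {x y : X}
    (h1 : y ∈ dN1 x) (h2 : x ∈ dN1 y) : rad x = rad y := by
  by_cases hxy : x = y
  · rw [hxy]
  · rw [rad_eq_dist hxy h1, rad_eq_dist (Ne.symm hxy) h2, dist_comm]

/-- In a locally finite discretely path-connected metric space, the radius of the smallest
closed ball centered at `x` containing at least two points does not depend on `x`. -/
theorem stmt8 {X : Type*} [MetricSpace X]
    (hlf : ∀ s : Set X, Bornology.IsBounded s → s.Finite)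
    (hpc : ∀ a b : X, PathJoined a b) :
    ∀ x y : X, rad x = rad y := by
  intro x y
  obtain ⟨n, c, hpath, h0, hn⟩ := hpc x y
  have key : ∀ i ≤ n, rad (c i) = rad (c 0) := by
    intro i hi
    induction i with
    | zero => rfl
    | succ k ih =>
      have hk : k < n := Nat.lt_of_succ_le hi
      obtain ⟨h1, h2⟩ := hpath k hk
      rw [← ih (Nat.le_of_lt hk), rad_eq_of_step h2 h1]
  rw [← h0, ← hn, key n le_rfl]
end

section
/- Let (X,d) be a finite path-connected metric space in normal form and f : X → R. Then max_{x≠y} |f(x)-f(y)|/d(x,y) ≤ max_{e ∈ E(X)} |f(e^+)-f(e^-)| ≤ d(X) · max_{x≠y} |f(x)-f(y)|/d(x,y), where d(X) = max_{e ∈ E(X)} d(e^-,e^+). -/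
open Metric Set Bornology

/-- `c` is a continuous path from `x` to `y` of minimal length `n`. -/
def IsMinPath {X : Type*} [MetricSpace X] (c : ℕ → X) (n : ℕ) (x y : X) : Prop :=
  IsContPath c n ∧ c 0 = x ∧ c n = y ∧
    ∀ (c' : ℕ → X) (m : ℕ), IsContPath c' m → c' 0 = x → c' m = y → n ≤ m

/-- The metric edge set `E(X)`: pairs `(x_{p_i^-}, x_{p_i^+})` arising from coverings of
`{0, ..., n}` by `s = ⌊dist x y⌋` consecutive intervals (encoded by their endpoints
`t 0 = 0 ≤ t 1 ≤ ... ≤ t s = n`) along minimal continuous paths from `x` to `y`. -/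
def metricEdges (X : Type*) [MetricSpace X] : Set (X × X) :=
  {e | ∃ x y : X, x ≠ y ∧ ∃ (c : ℕ → X) (n : ℕ), IsMinPath c n x y ∧
    ∃ t : ℕ → ℕ, t 0 = 0 ∧ t ⌊dist x y⌋₊ = n ∧ (∀ i, t i ≤ t (i + 1)) ∧
      ∃ i < ⌊dist x y⌋₊, e = (c (t i), c (t (i + 1)))}

/-- `d(X) = max_{e ∈ E(X)} d(e⁻, e⁺)`, measuring how far `X` is from being a graph. -/
noncomputable def dMax (X : Type*) [MetricSpace X] : ℝ :=
  sSup {r : ℝ | ∃ e ∈ metricEdges X, r = dist e.1 e.2}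


section LMHelpers
variable {X : Type*} [MetricSpace X]

private lemma one_le_dist_aux (hnf : ∀ x : X, rad x = 1) {x y : X} (h : x ≠ y) :
    1 ≤ dist x y := by
  by_contra hlt
  push_neg at hlt
  have hmem : dist x y ∈ {r : ℝ | (Metric.closedBall x r).Nontrivial} :=
    ⟨y, Metric.mem_closedBall.mpr (by rw [dist_comm]), x,
      Metric.mem_closedBall_self dist_nonneg, h.symm⟩
  have hbdd : BddBelow {r : ℝ | (Metric.closedBall x r).Nontrivial} := by
    refine ⟨0, fun r hr => ?_⟩
    by_contra hr0
    push_neg at hr0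
    simp only [Set.mem_setOf_eq, Metric.closedBall_eq_empty.mpr hr0] at hr
    exact Set.not_nontrivial_empty hr
  have : rad x ≤ dist x y := csInf_le hbdd hmem
  rw [hnf x] at this
  linarith

private lemma contPath_dist_le (hnf : ∀ x : X, rad x = 1) :
    ∀ n (c : ℕ → X), IsContPath c n → dist (c 0) (c n) ≤ n := by
  intro n
  induction n with
  | zero => intro c _; simp
  | succ n ih =>
    intro c hc
    have h1 : dist (c 0) (c n) ≤ n := ih c (fun i hi => hc i (by omega))
    have h2 : dist (c n) (c (n + 1)) ≤ 1 := by
      have := (hc n (by omega)).1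
      rw [dN1, hnf] at this
      rw [dist_comm]
      exact Metric.mem_closedBall.mp this
    have h3 := dist_triangle (c 0) (c n) (c (n + 1))
    push_cast
    linarith

private lemma exists_minPath (hpc : ∀ a b : X, PathJoined a b) (x y : X) :
    ∃ (c : ℕ → X) (n : ℕ), IsMinPath c n x y := by
  classical
  obtain ⟨n, c, hc, h0, hn⟩ := hpc x y
  have hP : ∃ m, ∃ c' : ℕ → X, IsContPath c' m ∧ c' 0 = x ∧ c' m = y := ⟨n, c, hc, h0, hn⟩
  obtain ⟨c', hc', h0', hn'⟩ := Nat.find_spec hP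
  exact ⟨c', Nat.find hP, hc', h0', hn',
    fun c'' m h1 h2 h3 => Nat.find_min' hP ⟨c'', h1, h2, h3⟩⟩

private lemma edges_of_pair (hpc : ∀ a b : X, PathJoined a b)
    (hnf : ∀ x : X, rad x = 1) {x y : X} (hxy : x ≠ y) :
    ∃ (c : ℕ → X) (t : ℕ → ℕ), c (t 0) = x ∧ c (t ⌊dist x y⌋₊) = y ∧
      ∀ i < ⌊dist x y⌋₊, (c (t i), c (t (i + 1))) ∈ metricEdges X := by
  obtain ⟨c, n, hmin⟩ := exists_minPath hpc x y
  obtain ⟨hc, h0, hn, hm⟩ := hmin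
  set s := ⌊dist x y⌋₊ with hs
  have hs1 : 1 ≤ s := Nat.le_floor (by exact_mod_cast one_le_dist_aux hnf hxy)
  have hdn : dist x y ≤ n := by
    have := contPath_dist_le hnf n c hc
    rwa [h0, hn] at this
  have hs0 : 0 < s := hs1
  have hsn : s ≤ n := by
    calc s = ⌊dist x y⌋₊ := hs
      _ ≤ ⌊(n : ℝ)⌋₊ := Nat.floor_mono hdn
      _ = n := Nat.floor_natCast n
  refine ⟨c, fun i => if i < s then i else n, ?_, ?_, ?_⟩
  · show c (if 0 < s then 0 else n) = x
    rw [if_pos hs0]; exact h0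
  · simp [hn]
  · intro i hi
    refine ⟨x, y, hxy, c, n, ⟨hc, h0, hn, hm⟩, fun j => if j < s then j else n,
      ?_, ?_, ?_, i, hi, rfl⟩
    · show (if 0 < s then 0 else n) = 0
      rw [if_pos hs0]
    · simp [← hs]
    · intro j
      dsimp only
      split_ifs <;> omega

end LMHelpers

/-- Linial–Magen type lemma for finite path-connected metric spaces in normal form:
`max_{x≠y} |f x - f y|/d(x,y) ≤ max_{e ∈ E(X)} |f(e⁺) - f(e⁻)| ≤ d(X) · max_{x≠y} |f x - f y|/d(x,y)`. -/
theorem stmt11 {X : Type*} [MetricSpace X] [Fintype X] [Nontrivial X]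
    (hpc : ∀ a b : X, PathJoined a b) (hnf : ∀ x : X, rad x = 1) (f : X → ℝ) :
    sSup {r : ℝ | ∃ x y : X, x ≠ y ∧ r = |f x - f y| / dist x y} ≤
        sSup {r : ℝ | ∃ e ∈ metricEdges X, r = |f e.2 - f e.1|} ∧
      sSup {r : ℝ | ∃ e ∈ metricEdges X, r = |f e.2 - f e.1|} ≤
        dMax X * sSup {r : ℝ | ∃ x y : X, x ≠ y ∧ r = |f x - f y| / dist x y} := by
  classical
  set Sr := {r : ℝ | ∃ x y : X, x ≠ y ∧ r = |f x - f y| / dist x y} with hSr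
  set Se := {r : ℝ | ∃ e ∈ metricEdges X, r = |f e.2 - f e.1|} with hSe
  set Sd := {r : ℝ | ∃ e ∈ metricEdges X, r = dist e.1 e.2} with hSd
  have hdmax : dMax X = sSup Sd := rfl
  have hSr_fin : Sr.Finite :=
    (Set.finite_range (fun p : X × X => |f p.1 - f p.2| / dist p.1 p.2)).subset
      (by rintro r ⟨x, y, _, rfl⟩; exact ⟨(x, y), rfl⟩)
  have hSe_fin : Se.Finite :=
    (Set.finite_range (fun p : X × X => |f p.2 - f p.1|)).subset
      (by rintro r ⟨e, _, rfl⟩; exact ⟨e, rfl⟩)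
  have hSd_fin : Sd.Finite :=
    (Set.finite_range (fun p : X × X => dist p.1 p.2)).subset
      (by rintro r ⟨e, _, rfl⟩; exact ⟨e, rfl⟩)
  obtain ⟨x0, y0, hxy0⟩ := exists_pair_ne X
  obtain ⟨c0, t0, -, -, he0⟩ := edges_of_pair hpc hnf hxy0
  have hsfl0 : 1 ≤ ⌊dist x0 y0⌋₊ :=
    Nat.le_floor (by exact_mod_cast one_le_dist_aux hnf hxy0)
  have hedge0 : (c0 (t0 0), c0 (t0 1)) ∈ metricEdges X := he0 0 hsfl0
  have hM0 : 0 ≤ sSup Se :=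
    le_trans (abs_nonneg _) (le_csSup hSe_fin.bddAbove ⟨_, hedge0, rfl⟩)
  have hL0 : 0 ≤ sSup Sr :=
    le_trans (div_nonneg (abs_nonneg _) dist_nonneg)
      (le_csSup hSr_fin.bddAbove ⟨x0, y0, hxy0, rfl⟩)
  have hD0 : 0 ≤ dMax X := by
    rw [hdmax]
    exact le_trans dist_nonneg (le_csSup hSd_fin.bddAbove ⟨_, hedge0, rfl⟩)
  constructor
  · apply Real.sSup_le _ hM0
    rintro r ⟨x, y, hxy, rfl⟩
    obtain ⟨c, t, hcx, hcy, hedge⟩ := edges_of_pair hpc hnf hxy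
    set s := ⌊dist x y⌋₊ with hs
    have hd1 : 1 ≤ dist x y := one_le_dist_aux hnf hxy
    have key : |f y - f x| ≤ s * sSup Se := by
      have hsum : f y - f x = ∑ i ∈ Finset.range s, (f (c (t (i + 1))) - f (c (t i))) := by
        rw [Finset.sum_range_sub (fun i => f (c (t i))), hcx, hcy]
      calc |f y - f x| = |∑ i ∈ Finset.range s, (f (c (t (i + 1))) - f (c (t i)))| := by
              rw [hsum]
        _ ≤ ∑ i ∈ Finset.range s, |f (c (t (i + 1))) - f (c (t i))| :=
              Finset.abs_sum_le_sum_abs _ _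
        _ ≤ ∑ _i ∈ Finset.range s, sSup Se :=
              Finset.sum_le_sum (fun i hi =>
                le_csSup hSe_fin.bddAbove ⟨_, hedge i (Finset.mem_range.mp hi), rfl⟩)
        _ = s * sSup Se := by
              rw [Finset.sum_const, Finset.card_range, nsmul_eq_mul]
    have hsd : (s : ℝ) ≤ dist x y := Nat.floor_le dist_nonneg
    rw [div_le_iff₀ (by linarith)]
    calc |f x - f y| = |f y - f x| := abs_sub_comm _ _
      _ ≤ s * sSup Se := key
      _ ≤ sSup Se * dist x y := by nlinarith
  · apply Real.sSup_le _ (mul_nonneg hD0 hL0)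
    rintro r ⟨e, he, rfl⟩
    by_cases heq : e.1 = e.2
    · rw [heq]
      simpa using mul_nonneg hD0 hL0
    · have hne : e.2 ≠ e.1 := fun h => heq h.symm
      have h1' : |f e.2 - f e.1| / dist e.2 e.1 ≤ sSup Sr :=
        le_csSup hSr_fin.bddAbove ⟨e.2, e.1, hne, rfl⟩
      have h2' : dist e.1 e.2 ≤ dMax X := by
        rw [hdmax]
        exact le_csSup hSd_fin.bddAbove ⟨e, he, rfl⟩
      have hd : 0 < dist e.2 e.1 := dist_pos.mpr hne
      rw [div_le_iff₀ hd] at h1'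
      calc |f e.2 - f e.1| ≤ sSup Sr * dist e.2 e.1 := h1'
        _ = dist e.1 e.2 * sSup Sr := by rw [dist_comm]; ring
        _ ≤ dMax X * sSup Sr := mul_le_mul_of_nonneg_right h2' hL0
end

section
/- In Z^2, if (c_0,d_0) and (c_2,d_2) are opposite (diagonal) vertices of a unit square and both lie in the interior component Int(γ) = Int(γ̃) ∩ Z^2 determined by a simple circuit γ not containing squares, then at least one of the two common axis-neighbors of (c_0,d_0) and (c_2,d_2) also lies in Int(γ). -/
/-- The four horizontal/vertical neighbours of a point of `ℤ × ℤ`. -/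
def dB1 (p : ℤ × ℤ) : Set (ℤ × ℤ) :=
  {(p.1 + 1, p.2), (p.1 - 1, p.2), (p.1, p.2 + 1), (p.1, p.2 - 1)}

/-- The four diagonal neighbours of a point of `ℤ × ℤ`. -/
def dB2 (p : ℤ × ℤ) : Set (ℤ × ℤ) :=
  {(p.1 + 1, p.2 + 1), (p.1 + 1, p.2 - 1), (p.1 - 1, p.2 + 1), (p.1 - 1, p.2 - 1)}

/-- A continuous circuit in `ℤ²`: consecutive points differ by one unit in one coordinate
and the endpoint equals the starting point. -/
def IsCircuit (c : ℕ → ℤ × ℤ) (n : ℕ) : Prop :=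
  (∀ i < n, c (i + 1) ∈ dB1 (c i)) ∧ c n = c 0

/-- The simplicity condition: whenever `c i ∈ dB2 (c j)` with `i < j`, then `j = i + 2` and
`c (i+1)` is a common axis-neighbour of `c i` and `c j`. -/
def SimpleCond (c : ℕ → ℤ × ℤ) (n : ℕ) : Prop :=
  ∀ i j : ℕ, i < j → j ≤ n → c i ∈ dB2 (c j) →
    j = i + 2 ∧ c (i + 1) ∈ dB1 (c i) ∩ dB1 (c j)

/-- A simple circuit in `ℤ²`: a continuous circuit with pairwise distinct points
`c 0, ..., c (n-1)` satisfying the simplicity condition. -/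
def IsSimpleCircuit (c : ℕ → ℤ × ℤ) (n : ℕ) : Prop :=
  IsCircuit c n ∧ (∀ i < n, ∀ j < n, c i = c j → i = j) ∧ SimpleCond c n

/-- `ConnIn S a b`: `a` and `b` are joined by a continuous path lying entirely in `S`. -/
def ConnIn (S : Set (ℤ × ℤ)) (a b : ℤ × ℤ) : Prop :=
  ∃ (n : ℕ) (c : ℕ → ℤ × ℤ), c 0 = a ∧ c n = b ∧ (∀ i ≤ n, c i ∈ S) ∧
    ∀ i < n, c (i + 1) ∈ dB1 (c i)

/-- The canonical embedding `ℤ² ↪ ℝ²`. -/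
def toR2 (p : ℤ × ℤ) : ℝ × ℝ := ((p.1 : ℝ), (p.2 : ℝ))

/-- The curve `γ̃ ⊆ ℝ²` associated to `γ ⊆ ℤ²`: the points of `γ` together with the closed
unit segments joining pairs of points of `γ` that are adjacent vertices of a unit square. -/
def tildeGamma (γ : Set (ℤ × ℤ)) : Set (ℝ × ℝ) :=
  (toR2 '' γ) ∪ ⋃ (a ∈ γ) (b ∈ γ) (_ : b ∈ dB1 a), segment ℝ (toR2 a) (toR2 b)

lemma mem_tg_left {γ : Set (ℤ × ℤ)} {z : ℤ × ℤ} (h : z ∈ γ) : toR2 z ∈ tildeGamma γ :=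
  Or.inl ⟨z, h, rfl⟩

lemma mem_tg_seg {γ : Set (ℤ × ℤ)} {a b : ℤ × ℤ} (ha : a ∈ γ) (hb : b ∈ γ)
    (hab : b ∈ dB1 a) {x : ℝ × ℝ} (hx : x ∈ segment ℝ (toR2 a) (toR2 b)) :
    x ∈ tildeGamma γ := by
  right
  simp only [Set.mem_iUnion]
  exact ⟨a, ha, b, hb, hab, hx⟩

lemma tg_elim {γ : Set (ℤ × ℤ)} {x : ℝ × ℝ} (h : x ∈ tildeGamma γ) :
    (∃ z ∈ γ, x = toR2 z) ∨
      ∃ a ∈ γ, ∃ b ∈ γ, b ∈ dB1 a ∧ x ∈ segment ℝ (toR2 a) (toR2 b) := by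
  rcases h with ⟨z, hz, rfl⟩ | h
  · exact Or.inl ⟨z, hz, rfl⟩
  · simp only [Set.mem_iUnion] at h
    obtain ⟨a, ha, b, hb, hab, hx⟩ := h
    exact Or.inr ⟨a, ha, b, hb, hab, hx⟩

lemma seg_coords {u v : ℤ × ℤ} {x : ℝ × ℝ} (h : x ∈ segment ℝ (toR2 u) (toR2 v)) :
    ∃ t : ℝ, 0 ≤ t ∧ t ≤ 1 ∧ x.1 = (u.1 : ℝ) + t * ((v.1 : ℝ) - u.1) ∧
      x.2 = (u.2 : ℝ) + t * ((v.2 : ℝ) - u.2) := by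
  rw [segment_eq_image] at h
  obtain ⟨t, ht, hx⟩ := h
  refine ⟨t, ht.1, ht.2, ?_, ?_⟩
  · have := congrArg Prod.fst hx
    simp [toR2] at this
    rw [← this]; ring
  · have := congrArg Prod.snd hx
    simp [toR2] at this
    rw [← this]; ring

lemma seg_mk {u v : ℤ × ℤ} {t : ℝ} (h0 : 0 ≤ t) (h1 : t ≤ 1) :
    (((u.1 : ℝ) + t * ((v.1 : ℝ) - u.1), (u.2 : ℝ) + t * ((v.2 : ℝ) - u.2)) : ℝ × ℝ)
      ∈ segment ℝ (toR2 u) (toR2 v) := by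
  rw [segment_eq_image]
  refine ⟨t, ⟨h0, h1⟩, ?_⟩
  apply Prod.ext <;> simp [toR2] <;> ring

lemma cast01 {w u : ℤ} {t : ℝ} (h : (w : ℝ) = (u : ℝ) + t) (h0 : 0 ≤ t) (h1 : t ≤ 1) :
    w = u ∨ w = u + 1 := by
  have hl : (u : ℝ) ≤ (w : ℝ) := by linarith
  have hr : (w : ℝ) ≤ (u : ℝ) + 1 := by linarith
  have hl' : u ≤ w := by exact_mod_cast hl
  have hr' : w ≤ u + 1 := by exact_mod_cast hr
  omega

lemma mem_dB1_iff {p v : ℤ × ℤ} : v ∈ dB1 p ↔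
    v = (p.1 + 1, p.2) ∨ v = (p.1 - 1, p.2) ∨ v = (p.1, p.2 + 1) ∨ v = (p.1, p.2 - 1) := by
  simp [dB1]

lemma lattice_on_seg {u v z : ℤ × ℤ} (huv : v ∈ dB1 u)
    (h : toR2 z ∈ segment ℝ (toR2 u) (toR2 v)) : z = u ∨ z = v := by
  obtain ⟨t, h0, h1, hx, hy⟩ := seg_coords h
  rcases mem_dB1_iff.mp huv with h' | h' | h' | h' <;> subst h' <;>
    simp only [toR2] at hx hy <;> push_cast at hx hy
  · have h2 : z.2 = u.2 := by exact_mod_cast (by linarith : (z.2 : ℝ) = (u.2 : ℝ))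
    have h1' : z.1 = u.1 ∨ z.1 = u.1 + 1 := cast01 (by linarith) h0 h1
    rcases h1' with h1' | h1' <;> [left; right] <;> exact Prod.ext h1' h2
  · have h2 : z.2 = u.2 := by exact_mod_cast (by linarith : (z.2 : ℝ) = (u.2 : ℝ))
    have h1' : z.1 = (u.1 - 1) ∨ z.1 = (u.1 - 1) + 1 := cast01 (t := 1 - t) (by push_cast; linarith) (by linarith) (by linarith)
    rcases h1' with h1' | h1' <;> [right; left] <;> exact Prod.ext (by omega) h2
  · have h2 : z.1 = u.1 := by exact_mod_cast (by linarith : (z.1 : ℝ) = (u.1 : ℝ))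
    have h1' : z.2 = u.2 ∨ z.2 = u.2 + 1 := cast01 (by linarith) h0 h1
    rcases h1' with h1' | h1' <;> [left; right] <;> exact Prod.ext h2 h1'
  · have h2 : z.1 = u.1 := by exact_mod_cast (by linarith : (z.1 : ℝ) = (u.1 : ℝ))
    have h1' : z.2 = (u.2 - 1) ∨ z.2 = (u.2 - 1) + 1 := cast01 (t := 1 - t) (by push_cast; linarith) (by linarith) (by linarith)
    rcases h1' with h1' | h1' <;> [right; left] <;> exact Prod.ext h2 (by omega)

lemma toR2_inj {a b : ℤ × ℤ} (h : toR2 a = toR2 b) : a = b := by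
  simp only [toR2, Prod.ext_iff] at h ⊢
  exact ⟨by exact_mod_cast h.1, by exact_mod_cast h.2⟩

lemma unit_seg_inter {u v a b : ℤ × ℤ} (h1 : v ∈ dB1 u) (h2 : b ∈ dB1 a) {x : ℝ × ℝ}
    (hx1 : x ∈ segment ℝ (toR2 u) (toR2 v)) (hx2 : x ∈ segment ℝ (toR2 a) (toR2 b)) :
    a = u ∨ a = v ∨ b = u ∨ b = v := by
  rcases mem_dB1_iff.mp h1 with rfl | rfl | rfl | rfl <;>
      rcases mem_dB1_iff.mp h2 with rfl | rfl | rfl | rfl <;>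
    [skip; skip; skip; skip; skip; skip; skip; skip; skip; skip; skip; skip; skip; skip; skip; skip]
  · obtain ⟨t, ht0, ht1, hxu, hyu⟩ := seg_coords hx1
    obtain ⟨s, hs0, hs1, hxa, hya⟩ := seg_coords hx2
    push_cast at hxu hyu hxa hya
    have e1l : (-1 : ℝ) ≤ (a.1 : ℝ) - u.1 := by linarith
    have e1r : ((a.1 : ℝ) - u.1) ≤ (1 : ℝ) := by linarith
    have e2l : (0 : ℝ) ≤ (a.2 : ℝ) - u.2 := by linarith
    have e2r : ((a.2 : ℝ) - u.2) ≤ (0 : ℝ) := by linarith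
    have f1l : (-1 : ℤ) ≤ a.1 - u.1 := by exact_mod_cast e1l
    have f1r : a.1 - u.1 ≤ (1 : ℤ) := by exact_mod_cast e1r
    have f2l : (0 : ℤ) ≤ a.2 - u.2 := by exact_mod_cast e2l
    have f2r : a.2 - u.2 ≤ (0 : ℤ) := by exact_mod_cast e2r
    simp only [Prod.ext_iff, Prod.mk.injEq, Prod.fst, Prod.snd]
    omega
  · obtain ⟨t, ht0, ht1, hxu, hyu⟩ := seg_coords hx1
    obtain ⟨s, hs0, hs1, hxa, hya⟩ := seg_coords hx2
    push_cast at hxu hyu hxa hya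
    have e1l : (0 : ℝ) ≤ (a.1 : ℝ) - u.1 := by linarith
    have e1r : ((a.1 : ℝ) - u.1) ≤ (2 : ℝ) := by linarith
    have e2l : (0 : ℝ) ≤ (a.2 : ℝ) - u.2 := by linarith
    have e2r : ((a.2 : ℝ) - u.2) ≤ (0 : ℝ) := by linarith
    have f1l : (0 : ℤ) ≤ a.1 - u.1 := by exact_mod_cast e1l
    have f1r : a.1 - u.1 ≤ (2 : ℤ) := by exact_mod_cast e1r
    have f2l : (0 : ℤ) ≤ a.2 - u.2 := by exact_mod_cast e2l
    have f2r : a.2 - u.2 ≤ (0 : ℤ) := by exact_mod_cast e2r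
    simp only [Prod.ext_iff, Prod.mk.injEq, Prod.fst, Prod.snd]
    omega
  · obtain ⟨t, ht0, ht1, hxu, hyu⟩ := seg_coords hx1
    obtain ⟨s, hs0, hs1, hxa, hya⟩ := seg_coords hx2
    push_cast at hxu hyu hxa hya
    have e1l : (0 : ℝ) ≤ (a.1 : ℝ) - u.1 := by linarith
    have e1r : ((a.1 : ℝ) - u.1) ≤ (1 : ℝ) := by linarith
    have e2l : (-1 : ℝ) ≤ (a.2 : ℝ) - u.2 := by linarith
    have e2r : ((a.2 : ℝ) - u.2) ≤ (0 : ℝ) := by linarith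
    have f1l : (0 : ℤ) ≤ a.1 - u.1 := by exact_mod_cast e1l
    have f1r : a.1 - u.1 ≤ (1 : ℤ) := by exact_mod_cast e1r
    have f2l : (-1 : ℤ) ≤ a.2 - u.2 := by exact_mod_cast e2l
    have f2r : a.2 - u.2 ≤ (0 : ℤ) := by exact_mod_cast e2r
    simp only [Prod.ext_iff, Prod.mk.injEq, Prod.fst, Prod.snd]
    omega
  · obtain ⟨t, ht0, ht1, hxu, hyu⟩ := seg_coords hx1
    obtain ⟨s, hs0, hs1, hxa, hya⟩ := seg_coords hx2
    push_cast at hxu hyu hxa hya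
    have e1l : (0 : ℝ) ≤ (a.1 : ℝ) - u.1 := by linarith
    have e1r : ((a.1 : ℝ) - u.1) ≤ (1 : ℝ) := by linarith
    have e2l : (0 : ℝ) ≤ (a.2 : ℝ) - u.2 := by linarith
    have e2r : ((a.2 : ℝ) - u.2) ≤ (1 : ℝ) := by linarith
    have f1l : (0 : ℤ) ≤ a.1 - u.1 := by exact_mod_cast e1l
    have f1r : a.1 - u.1 ≤ (1 : ℤ) := by exact_mod_cast e1r
    have f2l : (0 : ℤ) ≤ a.2 - u.2 := by exact_mod_cast e2l
    have f2r : a.2 - u.2 ≤ (1 : ℤ) := by exact_mod_cast e2r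
    simp only [Prod.ext_iff, Prod.mk.injEq, Prod.fst, Prod.snd]
    omega
  · obtain ⟨t, ht0, ht1, hxu, hyu⟩ := seg_coords hx1
    obtain ⟨s, hs0, hs1, hxa, hya⟩ := seg_coords hx2
    push_cast at hxu hyu hxa hya
    have e1l : (-2 : ℝ) ≤ (a.1 : ℝ) - u.1 := by linarith
    have e1r : ((a.1 : ℝ) - u.1) ≤ (0 : ℝ) := by linarith
    have e2l : (0 : ℝ) ≤ (a.2 : ℝ) - u.2 := by linarith
    have e2r : ((a.2 : ℝ) - u.2) ≤ (0 : ℝ) := by linarith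
    have f1l : (-2 : ℤ) ≤ a.1 - u.1 := by exact_mod_cast e1l
    have f1r : a.1 - u.1 ≤ (0 : ℤ) := by exact_mod_cast e1r
    have f2l : (0 : ℤ) ≤ a.2 - u.2 := by exact_mod_cast e2l
    have f2r : a.2 - u.2 ≤ (0 : ℤ) := by exact_mod_cast e2r
    simp only [Prod.ext_iff, Prod.mk.injEq, Prod.fst, Prod.snd]
    omega
  · obtain ⟨t, ht0, ht1, hxu, hyu⟩ := seg_coords hx1
    obtain ⟨s, hs0, hs1, hxa, hya⟩ := seg_coords hx2
    push_cast at hxu hyu hxa hya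
    have e1l : (-1 : ℝ) ≤ (a.1 : ℝ) - u.1 := by linarith
    have e1r : ((a.1 : ℝ) - u.1) ≤ (1 : ℝ) := by linarith
    have e2l : (0 : ℝ) ≤ (a.2 : ℝ) - u.2 := by linarith
    have e2r : ((a.2 : ℝ) - u.2) ≤ (0 : ℝ) := by linarith
    have f1l : (-1 : ℤ) ≤ a.1 - u.1 := by exact_mod_cast e1l
    have f1r : a.1 - u.1 ≤ (1 : ℤ) := by exact_mod_cast e1r
    have f2l : (0 : ℤ) ≤ a.2 - u.2 := by exact_mod_cast e2l
    have f2r : a.2 - u.2 ≤ (0 : ℤ) := by exact_mod_cast e2r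
    simp only [Prod.ext_iff, Prod.mk.injEq, Prod.fst, Prod.snd]
    omega
  · obtain ⟨t, ht0, ht1, hxu, hyu⟩ := seg_coords hx1
    obtain ⟨s, hs0, hs1, hxa, hya⟩ := seg_coords hx2
    push_cast at hxu hyu hxa hya
    have e1l : (-1 : ℝ) ≤ (a.1 : ℝ) - u.1 := by linarith
    have e1r : ((a.1 : ℝ) - u.1) ≤ (0 : ℝ) := by linarith
    have e2l : (-1 : ℝ) ≤ (a.2 : ℝ) - u.2 := by linarith
    have e2r : ((a.2 : ℝ) - u.2) ≤ (0 : ℝ) := by linarith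
    have f1l : (-1 : ℤ) ≤ a.1 - u.1 := by exact_mod_cast e1l
    have f1r : a.1 - u.1 ≤ (0 : ℤ) := by exact_mod_cast e1r
    have f2l : (-1 : ℤ) ≤ a.2 - u.2 := by exact_mod_cast e2l
    have f2r : a.2 - u.2 ≤ (0 : ℤ) := by exact_mod_cast e2r
    simp only [Prod.ext_iff, Prod.mk.injEq, Prod.fst, Prod.snd]
    omega
  · obtain ⟨t, ht0, ht1, hxu, hyu⟩ := seg_coords hx1
    obtain ⟨s, hs0, hs1, hxa, hya⟩ := seg_coords hx2
    push_cast at hxu hyu hxa hya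
    have e1l : (-1 : ℝ) ≤ (a.1 : ℝ) - u.1 := by linarith
    have e1r : ((a.1 : ℝ) - u.1) ≤ (0 : ℝ) := by linarith
    have e2l : (0 : ℝ) ≤ (a.2 : ℝ) - u.2 := by linarith
    have e2r : ((a.2 : ℝ) - u.2) ≤ (1 : ℝ) := by linarith
    have f1l : (-1 : ℤ) ≤ a.1 - u.1 := by exact_mod_cast e1l
    have f1r : a.1 - u.1 ≤ (0 : ℤ) := by exact_mod_cast e1r
    have f2l : (0 : ℤ) ≤ a.2 - u.2 := by exact_mod_cast e2l
    have f2r : a.2 - u.2 ≤ (1 : ℤ) := by exact_mod_cast e2r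
    simp only [Prod.ext_iff, Prod.mk.injEq, Prod.fst, Prod.snd]
    omega
  · obtain ⟨t, ht0, ht1, hxu, hyu⟩ := seg_coords hx1
    obtain ⟨s, hs0, hs1, hxa, hya⟩ := seg_coords hx2
    push_cast at hxu hyu hxa hya
    have e1l : (-1 : ℝ) ≤ (a.1 : ℝ) - u.1 := by linarith
    have e1r : ((a.1 : ℝ) - u.1) ≤ (0 : ℝ) := by linarith
    have e2l : (0 : ℝ) ≤ (a.2 : ℝ) - u.2 := by linarith
    have e2r : ((a.2 : ℝ) - u.2) ≤ (1 : ℝ) := by linarith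
    have f1l : (-1 : ℤ) ≤ a.1 - u.1 := by exact_mod_cast e1l
    have f1r : a.1 - u.1 ≤ (0 : ℤ) := by exact_mod_cast e1r
    have f2l : (0 : ℤ) ≤ a.2 - u.2 := by exact_mod_cast e2l
    have f2r : a.2 - u.2 ≤ (1 : ℤ) := by exact_mod_cast e2r
    simp only [Prod.ext_iff, Prod.mk.injEq, Prod.fst, Prod.snd]
    omega
  · obtain ⟨t, ht0, ht1, hxu, hyu⟩ := seg_coords hx1
    obtain ⟨s, hs0, hs1, hxa, hya⟩ := seg_coords hx2
    push_cast at hxu hyu hxa hya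
    have e1l : (0 : ℝ) ≤ (a.1 : ℝ) - u.1 := by linarith
    have e1r : ((a.1 : ℝ) - u.1) ≤ (1 : ℝ) := by linarith
    have e2l : (0 : ℝ) ≤ (a.2 : ℝ) - u.2 := by linarith
    have e2r : ((a.2 : ℝ) - u.2) ≤ (1 : ℝ) := by linarith
    have f1l : (0 : ℤ) ≤ a.1 - u.1 := by exact_mod_cast e1l
    have f1r : a.1 - u.1 ≤ (1 : ℤ) := by exact_mod_cast e1r
    have f2l : (0 : ℤ) ≤ a.2 - u.2 := by exact_mod_cast e2l
    have f2r : a.2 - u.2 ≤ (1 : ℤ) := by exact_mod_cast e2r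
    simp only [Prod.ext_iff, Prod.mk.injEq, Prod.fst, Prod.snd]
    omega
  · obtain ⟨t, ht0, ht1, hxu, hyu⟩ := seg_coords hx1
    obtain ⟨s, hs0, hs1, hxa, hya⟩ := seg_coords hx2
    push_cast at hxu hyu hxa hya
    have e1l : (0 : ℝ) ≤ (a.1 : ℝ) - u.1 := by linarith
    have e1r : ((a.1 : ℝ) - u.1) ≤ (0 : ℝ) := by linarith
    have e2l : (-1 : ℝ) ≤ (a.2 : ℝ) - u.2 := by linarith
    have e2r : ((a.2 : ℝ) - u.2) ≤ (1 : ℝ) := by linarith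
    have f1l : (0 : ℤ) ≤ a.1 - u.1 := by exact_mod_cast e1l
    have f1r : a.1 - u.1 ≤ (0 : ℤ) := by exact_mod_cast e1r
    have f2l : (-1 : ℤ) ≤ a.2 - u.2 := by exact_mod_cast e2l
    have f2r : a.2 - u.2 ≤ (1 : ℤ) := by exact_mod_cast e2r
    simp only [Prod.ext_iff, Prod.mk.injEq, Prod.fst, Prod.snd]
    omega
  · obtain ⟨t, ht0, ht1, hxu, hyu⟩ := seg_coords hx1
    obtain ⟨s, hs0, hs1, hxa, hya⟩ := seg_coords hx2
    push_cast at hxu hyu hxa hya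
    have e1l : (0 : ℝ) ≤ (a.1 : ℝ) - u.1 := by linarith
    have e1r : ((a.1 : ℝ) - u.1) ≤ (0 : ℝ) := by linarith
    have e2l : (0 : ℝ) ≤ (a.2 : ℝ) - u.2 := by linarith
    have e2r : ((a.2 : ℝ) - u.2) ≤ (2 : ℝ) := by linarith
    have f1l : (0 : ℤ) ≤ a.1 - u.1 := by exact_mod_cast e1l
    have f1r : a.1 - u.1 ≤ (0 : ℤ) := by exact_mod_cast e1r
    have f2l : (0 : ℤ) ≤ a.2 - u.2 := by exact_mod_cast e2l
    have f2r : a.2 - u.2 ≤ (2 : ℤ) := by exact_mod_cast e2r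
    simp only [Prod.ext_iff, Prod.mk.injEq, Prod.fst, Prod.snd]
    omega
  · obtain ⟨t, ht0, ht1, hxu, hyu⟩ := seg_coords hx1
    obtain ⟨s, hs0, hs1, hxa, hya⟩ := seg_coords hx2
    push_cast at hxu hyu hxa hya
    have e1l : (-1 : ℝ) ≤ (a.1 : ℝ) - u.1 := by linarith
    have e1r : ((a.1 : ℝ) - u.1) ≤ (0 : ℝ) := by linarith
    have e2l : (-1 : ℝ) ≤ (a.2 : ℝ) - u.2 := by linarith
    have e2r : ((a.2 : ℝ) - u.2) ≤ (0 : ℝ) := by linarith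
    have f1l : (-1 : ℤ) ≤ a.1 - u.1 := by exact_mod_cast e1l
    have f1r : a.1 - u.1 ≤ (0 : ℤ) := by exact_mod_cast e1r
    have f2l : (-1 : ℤ) ≤ a.2 - u.2 := by exact_mod_cast e2l
    have f2r : a.2 - u.2 ≤ (0 : ℤ) := by exact_mod_cast e2r
    simp only [Prod.ext_iff, Prod.mk.injEq, Prod.fst, Prod.snd]
    omega
  · obtain ⟨t, ht0, ht1, hxu, hyu⟩ := seg_coords hx1
    obtain ⟨s, hs0, hs1, hxa, hya⟩ := seg_coords hx2
    push_cast at hxu hyu hxa hya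
    have e1l : (0 : ℝ) ≤ (a.1 : ℝ) - u.1 := by linarith
    have e1r : ((a.1 : ℝ) - u.1) ≤ (1 : ℝ) := by linarith
    have e2l : (-1 : ℝ) ≤ (a.2 : ℝ) - u.2 := by linarith
    have e2r : ((a.2 : ℝ) - u.2) ≤ (0 : ℝ) := by linarith
    have f1l : (0 : ℤ) ≤ a.1 - u.1 := by exact_mod_cast e1l
    have f1r : a.1 - u.1 ≤ (1 : ℤ) := by exact_mod_cast e1r
    have f2l : (-1 : ℤ) ≤ a.2 - u.2 := by exact_mod_cast e2l
    have f2r : a.2 - u.2 ≤ (0 : ℤ) := by exact_mod_cast e2r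
    simp only [Prod.ext_iff, Prod.mk.injEq, Prod.fst, Prod.snd]
    omega
  · obtain ⟨t, ht0, ht1, hxu, hyu⟩ := seg_coords hx1
    obtain ⟨s, hs0, hs1, hxa, hya⟩ := seg_coords hx2
    push_cast at hxu hyu hxa hya
    have e1l : (0 : ℝ) ≤ (a.1 : ℝ) - u.1 := by linarith
    have e1r : ((a.1 : ℝ) - u.1) ≤ (0 : ℝ) := by linarith
    have e2l : (-2 : ℝ) ≤ (a.2 : ℝ) - u.2 := by linarith
    have e2r : ((a.2 : ℝ) - u.2) ≤ (0 : ℝ) := by linarith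
    have f1l : (0 : ℤ) ≤ a.1 - u.1 := by exact_mod_cast e1l
    have f1r : a.1 - u.1 ≤ (0 : ℤ) := by exact_mod_cast e1r
    have f2l : (-2 : ℤ) ≤ a.2 - u.2 := by exact_mod_cast e2l
    have f2r : a.2 - u.2 ≤ (0 : ℤ) := by exact_mod_cast e2r
    simp only [Prod.ext_iff, Prod.mk.injEq, Prod.fst, Prod.snd]
    omega
  · obtain ⟨t, ht0, ht1, hxu, hyu⟩ := seg_coords hx1
    obtain ⟨s, hs0, hs1, hxa, hya⟩ := seg_coords hx2
    push_cast at hxu hyu hxa hya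
    have e1l : (0 : ℝ) ≤ (a.1 : ℝ) - u.1 := by linarith
    have e1r : ((a.1 : ℝ) - u.1) ≤ (0 : ℝ) := by linarith
    have e2l : (-1 : ℝ) ≤ (a.2 : ℝ) - u.2 := by linarith
    have e2r : ((a.2 : ℝ) - u.2) ≤ (1 : ℝ) := by linarith
    have f1l : (0 : ℤ) ≤ a.1 - u.1 := by exact_mod_cast e1l
    have f1r : a.1 - u.1 ≤ (0 : ℤ) := by exact_mod_cast e1r
    have f2l : (-1 : ℤ) ≤ a.2 - u.2 := by exact_mod_cast e2l
    have f2r : a.2 - u.2 ≤ (1 : ℤ) := by exact_mod_cast e2r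
    simp only [Prod.ext_iff, Prod.mk.injEq, Prod.fst, Prod.snd]
    omega

lemma tg_lattice {γ : Set (ℤ × ℤ)} {z : ℤ × ℤ} (h : toR2 z ∈ tildeGamma γ) : z ∈ γ := by
  rcases tg_elim h with ⟨w, hw, hzw⟩ | ⟨a, ha, b, hb, hab, hx⟩
  · rwa [toR2_inj hzw]
  · rcases lattice_on_seg hab hx with rfl | rfl <;> assumption

lemma seg_avoid {γ : Set (ℤ × ℤ)} {u v : ℤ × ℤ} (hu : u ∉ γ) (hv : v ∉ γ)
    (huv : v ∈ dB1 u) {x : ℝ × ℝ} (hx : x ∈ segment ℝ (toR2 u) (toR2 v)) :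
    x ∉ tildeGamma γ := by
  intro hmem
  rcases tg_elim hmem with ⟨w, hw, rfl⟩ | ⟨a, ha, b, hb, hab, hx2⟩
  · rcases lattice_on_seg huv hx with rfl | rfl <;> [exact hu hw; exact hv hw]
  · rcases unit_seg_inter huv hab hx hx2 with rfl | rfl | rfl | rfl
    · exact hu ha
    · exact hv ha
    · exact hu hb
    · exact hv hb

lemma tg_coord {γ : Set (ℤ × ℤ)} {x : ℝ × ℝ} (hx : x ∈ tildeGamma γ) :
    (∃ z : ℤ, x.1 = (z : ℝ)) ∨ (∃ z : ℤ, x.2 = (z : ℝ)) := by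
  rcases tg_elim hx with ⟨w, _, rfl⟩ | ⟨a, _, b, _, hab, hx2⟩
  · exact Or.inl ⟨w.1, rfl⟩
  · obtain ⟨t, ht0, ht1, h1, h2⟩ := seg_coords hx2
    rcases mem_dB1_iff.mp hab with rfl | rfl | rfl | rfl <;>
      push_cast at h1 h2 <;> [right; right; left; left] <;>
      [exact ⟨a.2, by linarith⟩; exact ⟨a.2, by linarith⟩;
       exact ⟨a.1, by linarith⟩; exact ⟨a.1, by linarith⟩]

lemma tg_bound {γ : Set (ℤ × ℤ)} {K : ℤ} (hK : ∀ z ∈ γ, z.2 ≤ K) {x : ℝ × ℝ}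
    (hx : x ∈ tildeGamma γ) : x.2 ≤ (K : ℝ) := by
  rcases tg_elim hx with ⟨w, hw, rfl⟩ | ⟨a, ha, b, hb, hab, hx2⟩
  · show ((w.2:ℤ):ℝ) ≤ (K:ℝ)
    exact_mod_cast hK w hw
  · obtain ⟨t, ht0, ht1, h1, h2⟩ := seg_coords hx2
    have ha2 : (a.2 : ℝ) ≤ K := by exact_mod_cast hK a ha
    have hb2 : (b.2 : ℝ) ≤ K := by exact_mod_cast hK b hb
    rw [h2]
    nlinarith

open Finset

lemma zmod2_cancel {x y : ZMod 2} (h : x + y = 0) : x = y := by revert x y; decide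

lemma zmod2_self (x : ZMod 2) : x + x = 0 := by revert x; decide

lemma parity_step (c : ℕ → ℤ × ℤ) (n : ℕ) (hstep : ∀ i < n, c (i + 1) ∈ dB1 (c i))
    (hcyc : c n = c 0) (a : ℝ) (k : ℤ)
    (hx : ((a, (k : ℝ)) : ℝ × ℝ) ∉ tildeGamma (c '' {k | k ≤ n})) :
    (∑ i ∈ range n, if (c i).1 = (c (i + 1)).1 ∧ a < ((c i).1 : ℝ) ∧
        min (c i).2 (c (i + 1)).2 = k - 1 then (1 : ZMod 2) else 0)
    = ∑ i ∈ range n, if (c i).1 = (c (i + 1)).1 ∧ a < ((c i).1 : ℝ) ∧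
        min (c i).2 (c (i + 1)).2 = k then (1 : ZMod 2) else 0 := by
  classical
  set γ := c '' {k | k ≤ n} with hγ
  have hmemγ : ∀ i, i ≤ n → c i ∈ γ := fun i hi => ⟨i, hi, rfl⟩
  set ψ : ℕ → ZMod 2 := fun j => if a < ((c j).1 : ℝ) ∧ (c j).2 = k then 1 else 0 with hψ
  have hψn : ψ n = ψ 0 := by simp only [hψ, hcyc]
  have key : ∀ i ∈ range n,
      ((if (c i).1 = (c (i + 1)).1 ∧ a < ((c i).1 : ℝ) ∧
          min (c i).2 (c (i + 1)).2 = k - 1 then (1 : ZMod 2) else 0)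
        + if (c i).1 = (c (i + 1)).1 ∧ a < ((c i).1 : ℝ) ∧
          min (c i).2 (c (i + 1)).2 = k then (1 : ZMod 2) else 0)
      = ψ i + ψ (i + 1) := by
    intro i hi
    rw [mem_range] at hi
    have hseg : ∀ x : ℝ × ℝ, x ∈ segment ℝ (toR2 (c i)) (toR2 (c (i + 1))) →
        x ∈ tildeGamma γ :=
      fun x hx => mem_tg_seg (hmemγ i hi.le) (hmemγ (i + 1) hi) (hstep i hi) hx
    rcases mem_dB1_iff.mp (hstep i hi) with h' | h' | h' | h'
    · -- horizontal, x+1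
      have e1 : (c (i + 1)).1 = (c i).1 + 1 := by rw [h']
      have e2 : (c (i + 1)).2 = (c i).2 := by rw [h']
      have hv : ¬ ((c i).1 = (c (i + 1)).1) := by omega
      rw [if_neg (fun hc => hv hc.1), if_neg (fun hc => hv hc.1)]
      have er1 : ((c (i + 1)).1 : ℝ) = ((c i).1 : ℝ) + 1 := by rw [e1]; push_cast; ring
      by_cases hk : (c i).2 = k
      · by_cases hA : a < ((c i).1 : ℝ)
        · have hA2 : a < ((c (i + 1)).1 : ℝ) := by rw [er1]; linarith
          rw [hψ]
          simp only [e2]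
          rw [if_pos ⟨hA, hk⟩, if_pos ⟨hA2, hk⟩]
          try decide
        · by_cases hA2 : a < ((c (i + 1)).1 : ℝ)
          · exfalso
            apply hx
            apply hseg
            have hA2' : a < ((c i).1 : ℝ) + 1 := by rw [← er1]; exact hA2
            have hA' : ((c i).1 : ℝ) ≤ a := not_lt.mp hA
            have hk' : ((c i).2 : ℝ) = (k : ℝ) := by exact_mod_cast hk
            have hpt : ((a, (k : ℝ)) : ℝ × ℝ)
                = (((c i).1 : ℝ) + (a - (c i).1) * (((c (i + 1)).1 : ℝ) - (c i).1),
                   ((c i).2 : ℝ) + (a - (c i).1) * (((c (i + 1)).2 : ℝ) - (c i).2)) := by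
              have er2 : ((c (i + 1)).2 : ℝ) = ((c i).2 : ℝ) := by rw [e2]
              rw [er1, er2]
              apply Prod.ext
              · simp; try ring
              · simp [hk']
            rw [hpt]
            exact seg_mk (by linarith) (by linarith)
          · rw [hψ]
            simp only [e2]
            rw [if_neg (fun hc => hA hc.1), if_neg (fun hc => hA2 hc.1)]
      · rw [hψ]
        simp only [e2]
        rw [if_neg (fun hc => hk hc.2), if_neg (fun hc => hk hc.2)]
    · -- horizontal, x-1
      have e1 : (c (i + 1)).1 = (c i).1 - 1 := by rw [h']
      have e2 : (c (i + 1)).2 = (c i).2 := by rw [h']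
      have hv : ¬ ((c i).1 = (c (i + 1)).1) := by omega
      rw [if_neg (fun hc => hv hc.1), if_neg (fun hc => hv hc.1)]
      have er1 : ((c (i + 1)).1 : ℝ) = ((c i).1 : ℝ) - 1 := by rw [e1]; push_cast; ring
      by_cases hk : (c i).2 = k
      · by_cases hA2 : a < ((c (i + 1)).1 : ℝ)
        · have hA : a < ((c i).1 : ℝ) := by rw [er1] at hA2; linarith
          rw [hψ]
          simp only [e2]
          rw [if_pos ⟨hA, hk⟩, if_pos ⟨hA2, hk⟩]
          try decide
        · by_cases hA : a < ((c i).1 : ℝ)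
          · exfalso
            apply hx
            apply hseg
            have hA2' : ((c i).1 : ℝ) - 1 ≤ a := by rw [← er1]; exact not_lt.mp hA2
            have hk' : ((c i).2 : ℝ) = (k : ℝ) := by exact_mod_cast hk
            have hpt : ((a, (k : ℝ)) : ℝ × ℝ)
                = (((c i).1 : ℝ) + ((c i).1 - a) * (((c (i + 1)).1 : ℝ) - (c i).1),
                   ((c i).2 : ℝ) + ((c i).1 - a) * (((c (i + 1)).2 : ℝ) - (c i).2)) := by
              have er2 : ((c (i + 1)).2 : ℝ) = ((c i).2 : ℝ) := by rw [e2]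
              rw [er1, er2]
              apply Prod.ext
              · simp; try ring
              · simp [hk']
            rw [hpt]
            exact seg_mk (by linarith) (by linarith)
          · rw [hψ]
            simp only [e2]
            rw [if_neg (fun hc => hA hc.1), if_neg (fun hc => hA2 hc.1)]
      · rw [hψ]
        simp only [e2]
        rw [if_neg (fun hc => hk hc.2), if_neg (fun hc => hk hc.2)]
    · -- vertical, y+1
      have e1 : (c (i + 1)).1 = (c i).1 := by rw [h']
      have e2 : (c (i + 1)).2 = (c i).2 + 1 := by rw [h']
      have hv : (c i).1 = (c (i + 1)).1 := e1.symm
      have hmin : min (c i).2 (c (i + 1)).2 = (c i).2 := by omega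
      have er1 : ((c (i + 1)).1 : ℝ) = ((c i).1 : ℝ) := by rw [e1]
      rw [hψ]
      simp only [hmin, er1]
      by_cases hA : a < ((c i).1 : ℝ)
      · by_cases hk1 : (c i).2 = k
        · rw [if_neg (fun hc => by omega : ¬((c i).1 = (c (i+1)).1 ∧ a < ((c i).1:ℝ) ∧ (c i).2 = k - 1)),
             if_pos ⟨hv, hA, hk1⟩, if_pos ⟨hA, hk1⟩,
             if_neg (fun hc => by omega : ¬(a < ((c i).1:ℝ) ∧ (c (i+1)).2 = k))]
          try decide
        · by_cases hk2 : (c i).2 = k - 1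
          · rw [if_pos ⟨hv, hA, hk2⟩, if_neg (fun hc => hk1 hc.2.2),
               if_neg (fun hc => hk1 hc.2), if_pos ⟨hA, by omega⟩]
            try decide
          · rw [if_neg (fun hc => hk2 hc.2.2), if_neg (fun hc => hk1 hc.2.2),
               if_neg (fun hc => hk1 hc.2), if_neg (fun hc => by omega : ¬(a < ((c i).1:ℝ) ∧ (c (i+1)).2 = k))]
      · rw [if_neg (fun hc => hA hc.2.1), if_neg (fun hc => hA hc.2.1),
           if_neg (fun hc => hA hc.1), if_neg (fun hc => hA hc.1)]
    · -- vertical, y-1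
      have e1 : (c (i + 1)).1 = (c i).1 := by rw [h']
      have e2 : (c (i + 1)).2 = (c i).2 - 1 := by rw [h']
      have hv : (c i).1 = (c (i + 1)).1 := e1.symm
      have hmin : min (c i).2 (c (i + 1)).2 = (c i).2 - 1 := by omega
      have er1 : ((c (i + 1)).1 : ℝ) = ((c i).1 : ℝ) := by rw [e1]
      rw [hψ]
      simp only [hmin, er1]
      by_cases hA : a < ((c i).1 : ℝ)
      · by_cases hk1 : (c i).2 = k
        · rw [if_pos ⟨hv, hA, by omega⟩, if_neg (fun hc => by omega : ¬((c i).1 = (c (i+1)).1 ∧ a < ((c i).1:ℝ) ∧ (c i).2 - 1 = k)),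
             if_pos ⟨hA, hk1⟩, if_neg (fun hc => by omega : ¬(a < ((c i).1:ℝ) ∧ (c (i+1)).2 = k))]
          try decide
        · by_cases hk2 : (c i).2 = k + 1
          · rw [if_neg (fun hc => by omega : ¬((c i).1 = (c (i+1)).1 ∧ a < ((c i).1:ℝ) ∧ (c i).2 - 1 = k - 1)),
               if_pos ⟨hv, hA, by omega⟩, if_neg (fun hc => hk1 hc.2),
               if_pos ⟨hA, by omega⟩]
            try decide
          · rw [if_neg (fun hc => by omega : ¬((c i).1 = (c (i+1)).1 ∧ a < ((c i).1:ℝ) ∧ (c i).2 - 1 = k - 1)),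
               if_neg (fun hc => by omega : ¬((c i).1 = (c (i+1)).1 ∧ a < ((c i).1:ℝ) ∧ (c i).2 - 1 = k)),
               if_neg (fun hc => hk1 hc.2), if_neg (fun hc => by omega : ¬(a < ((c i).1:ℝ) ∧ (c (i+1)).2 = k))]
      · rw [if_neg (fun hc => hA hc.2.1), if_neg (fun hc => hA hc.2.1),
           if_neg (fun hc => hA hc.1), if_neg (fun hc => hA hc.1)]
  have hsum : ((∑ i ∈ range n, if (c i).1 = (c (i + 1)).1 ∧ a < ((c i).1 : ℝ) ∧
        min (c i).2 (c (i + 1)).2 = k - 1 then (1 : ZMod 2) else 0)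
      + ∑ i ∈ range n, if (c i).1 = (c (i + 1)).1 ∧ a < ((c i).1 : ℝ) ∧
        min (c i).2 (c (i + 1)).2 = k then (1 : ZMod 2) else 0)
      = (∑ i ∈ range n, ψ i) + ∑ i ∈ range n, ψ (i + 1) := by
    rw [← Finset.sum_add_distrib, ← Finset.sum_add_distrib]
    exact Finset.sum_congr rfl key
  have hshift : (∑ i ∈ range n, ψ (i + 1)) = ∑ i ∈ range n, ψ i := by
    have h1 := Finset.sum_range_succ' ψ n
    have h2 := Finset.sum_range_succ ψ n
    rw [h2, hψn] at h1
    exact (add_right_cancel h1).symm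
  rw [hshift] at hsum
  exact zmod2_cancel (hsum.trans (zmod2_self _))

open Finset
open scoped Classical

noncomputable def fpar (c : ℕ → ℤ × ℤ) (n : ℕ) (x : ℝ × ℝ) : ZMod 2 :=
  ∑ i ∈ range n, if (c i).1 = (c (i + 1)).1 ∧ x.1 < ((c i).1 : ℝ) ∧
      ((min (c i).2 (c (i + 1)).2 : ℤ) : ℝ) ≤ x.2 ∧
      x.2 < ((min (c i).2 (c (i + 1)).2 : ℤ) : ℝ) + 1
    then (1 : ZMod 2) else 0

lemma side_pres {t z m δ : ℝ} (hδpos : 0 < δ) (h : |z - t| < δ) (hd : δ ≤ |t - m|) :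
    (t < m ↔ z < m) := by
  have h' := abs_lt.mp h
  rcases lt_trichotomy t m with hc | hc | hc
  · have : |t - m| = m - t := by rw [abs_of_neg (by linarith)]; ring
    rw [this] at hd
    constructor <;> intro <;> linarith
  · rw [hc, sub_self, abs_zero] at hd; linarith
  · have : |t - m| = t - m := abs_of_pos (by linarith)
    rw [this] at hd
    constructor <;> intro <;> linarith

lemma vert_mem (c : ℕ → ℤ × ℤ) (n : ℕ) (hstep : ∀ i < n, c (i + 1) ∈ dB1 (c i))
    {i : ℕ} (hi : i < n) (hv : (c i).1 = (c (i + 1)).1) {w : ℝ}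
    (hw1 : ((min (c i).2 (c (i + 1)).2 : ℤ) : ℝ) ≤ w)
    (hw2 : w ≤ ((min (c i).2 (c (i + 1)).2 : ℤ) : ℝ) + 1) :
    ((((c i).1 : ℝ), w) : ℝ × ℝ) ∈ tildeGamma (c '' {k | k ≤ n}) := by
  have hmemγ : ∀ j, j ≤ n → c j ∈ c '' {k | k ≤ n} := fun j hj => ⟨j, hj, rfl⟩
  apply mem_tg_seg (hmemγ i hi.le) (hmemγ (i + 1) hi) (hstep i hi)
  rcases mem_dB1_iff.mp (hstep i hi) with h' | h' | h' | h'
  · exfalso; have : (c (i + 1)).1 = (c i).1 + 1 := by rw [h']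
    omega
  · exfalso; have : (c (i + 1)).1 = (c i).1 - 1 := by rw [h']
    omega
  · have e2 : (c (i + 1)).2 = (c i).2 + 1 := by rw [h']
    have hlo : min (c i).2 (c (i + 1)).2 = (c i).2 := by omega
    rw [hlo] at hw1 hw2
    have er1 : ((c (i + 1)).1 : ℝ) = ((c i).1 : ℝ) := by rw [← hv]
    have er2 : ((c (i + 1)).2 : ℝ) = ((c i).2 : ℝ) + 1 := by rw [e2]; push_cast; ring
    have hpt : ((((c i).1 : ℝ), w) : ℝ × ℝ)
        = (((c i).1 : ℝ) + (w - ((c i).2 : ℝ)) * (((c (i + 1)).1 : ℝ) - (c i).1),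
           ((c i).2 : ℝ) + (w - ((c i).2 : ℝ)) * (((c (i + 1)).2 : ℝ) - (c i).2)) := by
      rw [er1, er2]
      apply Prod.ext
      · simp
      · simp; try ring
    rw [hpt]
    exact seg_mk (by linarith) (by linarith)
  · have e2 : (c (i + 1)).2 = (c i).2 - 1 := by rw [h']
    have hlo : min (c i).2 (c (i + 1)).2 = (c i).2 - 1 := by omega
    rw [hlo] at hw1 hw2
    have er1 : ((c (i + 1)).1 : ℝ) = ((c i).1 : ℝ) := by rw [← hv]
    have er2 : ((c (i + 1)).2 : ℝ) = ((c i).2 : ℝ) - 1 := by rw [e2]; push_cast; ring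
    have hc2 : (((c i).2 - 1 : ℤ) : ℝ) = ((c i).2 : ℝ) - 1 := by push_cast; ring
    rw [hc2] at hw1 hw2
    have hpt : ((((c i).1 : ℝ), w) : ℝ × ℝ)
        = (((c i).1 : ℝ) + (((c i).2 : ℝ) - w) * (((c (i + 1)).1 : ℝ) - (c i).1),
           ((c i).2 : ℝ) + (((c i).2 : ℝ) - w) * (((c (i + 1)).2 : ℝ) - (c i).2)) := by
      rw [er1, er2]
      apply Prod.ext
      · simp
      · simp; try ring
    rw [hpt]
    exact seg_mk (by linarith) (by linarith)

open Finset
open scoped Classical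

lemma loc_const (c : ℕ → ℤ × ℤ) (n : ℕ) (hn : 0 < n)
    (hstep : ∀ i < n, c (i + 1) ∈ dB1 (c i)) (hcyc : c n = c 0)
    {x : ℝ × ℝ} (hx : x ∉ tildeGamma (c '' {k | k ≤ n})) :
    ∃ δ : ℝ, 0 < δ ∧ ∀ z : ℝ × ℝ, |z.1 - x.1| < δ → |z.2 - x.2| < δ →
      fpar c n z = fpar c n x := by
  classical
  set D : ℕ → ℝ := fun i =>
    min (if x.1 = ((c i).1 : ℝ) then 1 else |x.1 - ((c i).1 : ℝ)|)
      (min (if x.2 = ((min (c i).2 (c (i + 1)).2 : ℤ) : ℝ) then 1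
            else |x.2 - ((min (c i).2 (c (i + 1)).2 : ℤ) : ℝ)|)
           (if x.2 = ((min (c i).2 (c (i + 1)).2 : ℤ) : ℝ) + 1 then 1
            else |x.2 - (((min (c i).2 (c (i + 1)).2 : ℤ) : ℝ) + 1)|)) with hD
  have habs : ∀ y w : ℝ, 0 < if y = w then 1 else |y - w| := by
    intro y w
    by_cases h : y = w
    · simp [h]
    · simp [h, abs_pos, sub_ne_zero.mpr h]
  have hne : (range n).Nonempty := ⟨0, mem_range.mpr hn⟩
  set δ : ℝ := min 2⁻¹ ((range n).inf' hne D) with hδdef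
  have hDpos : ∀ i ∈ range n, 0 < D i := by
    intro i _
    exact lt_min (habs _ _) (lt_min (habs _ _) (habs _ _))
  have hδpos : 0 < δ := lt_min (by norm_num) ((Finset.lt_inf'_iff hne).mpr hDpos)
  have hδhalf : δ ≤ 2⁻¹ := min_le_left _ _
  have hδle : ∀ i, i < n → δ ≤ D i := fun i hi =>
    (min_le_right _ _).trans (Finset.inf'_le D (mem_range.mpr hi))
  have hdx : ∀ i, i < n → x.1 ≠ ((c i).1 : ℝ) → δ ≤ |x.1 - ((c i).1 : ℝ)| := by
    intro i hi hne'
    have := (hδle i hi).trans (min_le_left _ _)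
    rwa [if_neg hne'] at this
  have hdy1 : ∀ i, i < n → x.2 ≠ ((min (c i).2 (c (i + 1)).2 : ℤ) : ℝ) →
      δ ≤ |x.2 - ((min (c i).2 (c (i + 1)).2 : ℤ) : ℝ)| := by
    intro i hi hne'
    have := (hδle i hi).trans ((min_le_right _ _).trans (min_le_left _ _))
    rwa [if_neg hne'] at this
  have hdy2 : ∀ i, i < n → x.2 ≠ ((min (c i).2 (c (i + 1)).2 : ℤ) : ℝ) + 1 →
      δ ≤ |x.2 - (((min (c i).2 (c (i + 1)).2 : ℤ) : ℝ) + 1)| := by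
    intro i hi hne'
    have := (hδle i hi).trans ((min_le_right _ _).trans (min_le_right _ _))
    rwa [if_neg hne'] at this
  refine ⟨δ, hδpos, ?_⟩
  intro z hz1 hz2
  have hz1' := abs_lt.mp hz1
  have hz2' := abs_lt.mp hz2
  by_cases hbint : ∃ m : ℤ, x.2 = (m : ℝ)
  · obtain ⟨m, hm2⟩ := hbint
    have hxm : ((x.1, (m : ℝ)) : ℝ × ℝ) = x := by
      apply Prod.ext
      · rfl
      · exact hm2.symm
    by_cases hz2m : (m : ℝ) ≤ z.2
    · -- termwise equal
      apply Finset.sum_congr rfl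
      intro i hi
      rw [mem_range] at hi
      apply if_congr _ rfl rfl
      set L : ℤ := min (c i).2 (c (i + 1)).2 with hL
      by_cases hv : (c i).1 = (c (i + 1)).1
      · by_cases hm1 : x.1 = ((c i).1 : ℝ)
        · have hnotin : ¬ ((L : ℝ) ≤ (m : ℝ) ∧ (m : ℝ) ≤ (L : ℝ) + 1) := by
            intro hcon
            apply hx
            have hxx : x = (((c i).1 : ℝ), (m : ℝ)) := by rw [← hm1, hxm]
            rw [hxx]
            exact vert_mem c n hstep hi hv hcon.1 hcon.2
          have hLm : (m ≤ L - 1) ∨ (L + 2 ≤ m) := by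
            by_contra hcc
            push_neg at hcc
            obtain ⟨h1, h2⟩ := hcc
            apply hnotin
            have hLm1 : L ≤ m := by omega
            have hm1L : m ≤ L + 1 := by omega
            constructor
            · exact_mod_cast hLm1
            · have : (m : ℝ) ≤ ((L + 1 : ℤ) : ℝ) := by exact_mod_cast hm1L
              push_cast at this
              linarith
          apply iff_of_false
          · rintro ⟨_, _, hy1, hy2⟩
            rcases hLm with hc | hc
            · have hcr : (m : ℝ) ≤ ((L - 1 : ℤ) : ℝ) := by exact_mod_cast hc
              push_cast at hcr
              linarith [hz2'.2, hδhalf]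
            · have hcr : ((L + 2 : ℤ) : ℝ) ≤ (m : ℝ) := by exact_mod_cast hc
              push_cast at hcr
              linarith [hz2m]
          · rintro ⟨_, hs, _⟩
            rw [← hm1] at hs
            exact lt_irrefl _ hs
        · have hside : (x.1 < ((c i).1 : ℝ)) ↔ (z.1 < ((c i).1 : ℝ)) :=
            side_pres hδpos hz1 (hdx i hi hm1)
          have hy : ((L : ℝ) ≤ z.2 ∧ z.2 < (L : ℝ) + 1) ↔
              ((L : ℝ) ≤ x.2 ∧ x.2 < (L : ℝ) + 1) := by
            rw [hm2]
            have hz2u : z.2 < (m : ℝ) + 2⁻¹ := by linarith [hz2'.2, hδhalf]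
            constructor
            · rintro ⟨hy1, hy2⟩
              have h1' : L ≤ m := by
                by_contra hcc
                push_neg at hcc
                have hcr : ((m + 1 : ℤ) : ℝ) ≤ (L : ℝ) := by exact_mod_cast hcc
                push_cast at hcr
                linarith
              have h2' : m ≤ L := by
                by_contra hcc
                push_neg at hcc
                have hcr : ((L + 1 : ℤ) : ℝ) ≤ (m : ℝ) := by exact_mod_cast hcc
                push_cast at hcr
                linarith
              have hLm' : (L : ℝ) = (m : ℝ) := by exact_mod_cast le_antisymm h1' h2'
              exact ⟨le_of_eq hLm', by linarith⟩
            · rintro ⟨hy1, hy2⟩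
              have h2' : m ≤ L := by
                by_contra hcc
                push_neg at hcc
                have hcr : ((L + 1 : ℤ) : ℝ) ≤ (m : ℝ) := by exact_mod_cast hcc
                push_cast at hcr
                linarith
              have h1' : L ≤ m := by exact_mod_cast hy1
              have hLm' : (L : ℝ) = (m : ℝ) := by exact_mod_cast le_antisymm h1' h2'
              exact ⟨by rw [hLm']; exact hz2m, by rw [hLm']; linarith⟩
          constructor
          · rintro ⟨hv', hs, hy1, hy2⟩
            obtain ⟨ha, hb⟩ := hy.mp ⟨hy1, hy2⟩
            exact ⟨hv', hside.mpr hs, ha, hb⟩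
          · rintro ⟨hv', hs, hy1, hy2⟩
            obtain ⟨ha, hb⟩ := hy.mpr ⟨hy1, hy2⟩
            exact ⟨hv', hside.mp hs, ha, hb⟩
      · apply iff_of_false <;> (rintro ⟨hv', _⟩; exact hv hv')
    · push_neg at hz2m
      have hzlow : (m : ℝ) - 2⁻¹ < z.2 := by linarith [hz1'.1, hδhalf, hz2'.1]
      have hfz : fpar c n z = ∑ i ∈ range n,
          if (c i).1 = (c (i + 1)).1 ∧ x.1 < ((c i).1 : ℝ) ∧
            min (c i).2 (c (i + 1)).2 = m - 1 then (1 : ZMod 2) else 0 := by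
        apply Finset.sum_congr rfl
        intro i hi
        rw [mem_range] at hi
        apply if_congr _ rfl rfl
        set L : ℤ := min (c i).2 (c (i + 1)).2 with hL
        by_cases hv : (c i).1 = (c (i + 1)).1
        · have hyiff : ((L : ℝ) ≤ z.2 ∧ z.2 < (L : ℝ) + 1) ↔ L = m - 1 := by
            constructor
            · rintro ⟨hy1, hy2⟩
              have h1' : L ≤ m - 1 := by
                have h1 : (L : ℝ) < (m : ℝ) := lt_of_le_of_lt hy1 hz2m
                have : L < m := by exact_mod_cast h1
                omega
              have h2' : m - 1 ≤ L := by
                by_contra hcc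
                push_neg at hcc
                have : (L : ℝ) ≤ ((m - 2 : ℤ) : ℝ) := by
                  exact_mod_cast (by omega : L ≤ m - 2)
                push_cast at this
                linarith
              omega
            · intro hLe
              have hLr : (L : ℝ) = (m : ℝ) - 1 := by
                have : (L : ℝ) = ((m - 1 : ℤ) : ℝ) := by exact_mod_cast hLe
                push_cast at this
                linarith
              constructor
              · rw [hLr]; linarith
              · rw [hLr]; linarith
          by_cases hm1 : x.1 = ((c i).1 : ℝ)
          · apply iff_of_false
            · rintro ⟨_, _, hy1, hy2⟩
              have hLe := hyiff.mp ⟨hy1, hy2⟩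
              apply hx
              have hLr : (L : ℝ) = (m : ℝ) - 1 := by
                have : (L : ℝ) = ((m - 1 : ℤ) : ℝ) := by exact_mod_cast hLe
                push_cast at this
                linarith
              have hxx : x = (((c i).1 : ℝ), (m : ℝ)) := by rw [← hm1, hxm]
              rw [hxx]
              exact vert_mem c n hstep hi hv (by rw [hLr]; linarith) (by rw [hLr]; linarith)
            · rintro ⟨_, hs, _⟩
              rw [← hm1] at hs
              exact lt_irrefl _ hs
          · have hside : (x.1 < ((c i).1 : ℝ)) ↔ (z.1 < ((c i).1 : ℝ)) :=
              side_pres hδpos hz1 (hdx i hi hm1)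
            constructor
            · rintro ⟨hv', hs, hy1, hy2⟩
              exact ⟨hv', hside.mpr hs, hyiff.mp ⟨hy1, hy2⟩⟩
            · rintro ⟨hv', hs, hLe⟩
              obtain ⟨ha, hb⟩ := hyiff.mpr hLe
              exact ⟨hv', hside.mp hs, ha, hb⟩
        · apply iff_of_false <;> (rintro ⟨hv', _⟩; exact hv hv')
      have hfx : fpar c n x = ∑ i ∈ range n,
          if (c i).1 = (c (i + 1)).1 ∧ x.1 < ((c i).1 : ℝ) ∧
            min (c i).2 (c (i + 1)).2 = m then (1 : ZMod 2) else 0 := by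
        apply Finset.sum_congr rfl
        intro i hi
        rw [mem_range] at hi
        apply if_congr _ rfl rfl
        set L : ℤ := min (c i).2 (c (i + 1)).2 with hL
        have hyiff : ((L : ℝ) ≤ x.2 ∧ x.2 < (L : ℝ) + 1) ↔ L = m := by
          rw [hm2]
          constructor
          · rintro ⟨hy1, hy2⟩
            have h1 : L ≤ m := by exact_mod_cast hy1
            have h2 : m < L + 1 := by
              have : (m : ℝ) < ((L + 1 : ℤ) : ℝ) := by push_cast; linarith
              exact_mod_cast this
            omega
          · intro hLe
            have : (L : ℝ) = (m : ℝ) := by exact_mod_cast hLe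
            exact ⟨le_of_eq this, by linarith⟩
        constructor
        · rintro ⟨hv', hs, hy1, hy2⟩
          exact ⟨hv', hs, hyiff.mp ⟨hy1, hy2⟩⟩
        · rintro ⟨hv', hs, hLe⟩
          obtain ⟨ha, hb⟩ := hyiff.mpr hLe
          exact ⟨hv', hs, ha, hb⟩
      rw [hfz, hfx]
      exact parity_step c n hstep hcyc x.1 m (by rw [hxm]; exact hx)
  · apply Finset.sum_congr rfl
    intro i hi
    rw [mem_range] at hi
    apply if_congr _ rfl rfl
    set L : ℤ := min (c i).2 (c (i + 1)).2 with hL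
    have hnel : x.2 ≠ (L : ℝ) := fun hcon => hbint ⟨L, hcon⟩
    have hnel2 : x.2 ≠ (L : ℝ) + 1 := fun hcon =>
      hbint ⟨L + 1, by push_cast; linarith [hcon]⟩
    by_cases hv : (c i).1 = (c (i + 1)).1
    · have hy1iff : ((L : ℝ) ≤ z.2) ↔ ((L : ℝ) ≤ x.2) := by
        have h := not_congr (side_pres hδpos hz2 (hdy1 i hi hnel))
        rw [not_lt, not_lt] at h
        exact h.symm
      have hy2iff : (z.2 < (L : ℝ) + 1) ↔ (x.2 < (L : ℝ) + 1) :=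
        (side_pres hδpos hz2 (hdy2 i hi hnel2)).symm
      by_cases hm1 : x.1 = ((c i).1 : ℝ)
      · apply iff_of_false
        · rintro ⟨_, _, hy1, hy2⟩
          apply hx
          have hw1 : (L : ℝ) ≤ x.2 := hy1iff.mp hy1
          have hw2 : x.2 ≤ (L : ℝ) + 1 := le_of_lt (hy2iff.mp hy2)
          have hxx : x = (((c i).1 : ℝ), x.2) := by rw [← hm1]
          rw [hxx]
          exact vert_mem c n hstep hi hv hw1 hw2
        · rintro ⟨_, hs, _⟩
          rw [← hm1] at hs
          exact lt_irrefl _ hs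
      · have hside : (x.1 < ((c i).1 : ℝ)) ↔ (z.1 < ((c i).1 : ℝ)) :=
          side_pres hδpos hz1 (hdx i hi hm1)
        constructor
        · rintro ⟨hv', hs, hy1, hy2⟩
          exact ⟨hv', hside.mpr hs, hy1iff.mp hy1, hy2iff.mp hy2⟩
        · rintro ⟨hv', hs, hy1, hy2⟩
          exact ⟨hv', hside.mp hs, hy1iff.mpr hy1, hy2iff.mpr hy2⟩
    · apply iff_of_false <;> (rintro ⟨hv', _⟩; exact hv hv')

open Finset
open scoped Classical

lemma not_preconn (c : ℕ → ℤ × ℤ) (n : ℕ) (hn : 4 ≤ n)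
    (hstep : ∀ i < n, c (i + 1) ∈ dB1 (c i)) (hcyc : c n = c 0)
    (hinj : ∀ i < n, ∀ j < n, c i = c j → i = j) :
    ¬ IsPreconnected ((tildeGamma (c '' {k | k ≤ n}))ᶜ) := by
  classical
  set γ : Set (ℤ × ℤ) := c '' {k | k ≤ n} with hγ
  have hmemγ : ∀ i, i ≤ n → c i ∈ γ := fun i hi => ⟨i, hi, rfl⟩
  -- the K bound
  have hKne : ((range (n + 1)).image (fun i => (c i).2)).Nonempty :=
    ⟨(c 0).2, mem_image.mpr ⟨0, mem_range.mpr (by omega), rfl⟩⟩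
  set K : ℤ := ((range (n + 1)).image (fun i => (c i).2)).max' hKne with hKdef
  have hK : ∀ z ∈ γ, z.2 ≤ K := by
    rintro z ⟨i, hi, rfl⟩
    simp only [Set.mem_setOf_eq] at hi
    have hi' : i ∈ range (n + 1) := mem_range.mpr (by omega)
    rw [hKdef]
    exact Finset.le_max' ((range (n + 1)).image (fun j => (c j).2)) ((c i).2)
      (mem_image.mpr ⟨i, hi', rfl⟩)
  set x0 : ℝ × ℝ := ((0 : ℝ), (K : ℝ) + 2) with hx0def
  have hx0 : x0 ∉ tildeGamma γ := by
    intro h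
    have := tg_bound hK h
    simp only [hx0def] at this
    linarith
  have hf0 : fpar c n x0 = 0 := by
    apply Finset.sum_eq_zero
    intro i hi
    rw [mem_range] at hi
    rw [if_neg]
    rintro ⟨_, _, _, hlt⟩
    have hL : min (c i).2 (c (i + 1)).2 ≤ K := by
      have := hK (c i) (hmemγ i hi.le)
      omega
    have hLr : ((min (c i).2 (c (i + 1)).2 : ℤ) : ℝ) ≤ (K : ℝ) := by exact_mod_cast hL
    have : x0.2 = (K : ℝ) + 2 := rfl
    linarith [hlt]
  -- the M bound and a vertical edge at x = M
  have hMne : ((range (n + 1)).image (fun i => (c i).1)).Nonempty :=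
    ⟨(c 0).1, mem_image.mpr ⟨0, mem_range.mpr (by omega), rfl⟩⟩
  set M : ℤ := ((range (n + 1)).image (fun i => (c i).1)).max' hMne with hMdef
  have hM : ∀ i, i ≤ n → (c i).1 ≤ M := by
    intro i hi
    have hi' : i ∈ range (n + 1) := mem_range.mpr (by omega)
    rw [hMdef]
    exact Finset.le_max' ((range (n + 1)).image (fun j => (c j).1)) ((c i).1)
      (mem_image.mpr ⟨i, hi', rfl⟩)
  have hMmem : ∃ i1, i1 < n ∧ (c i1).1 = M := by
    have := Finset.max'_mem _ hMne
    rw [← hMdef] at this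
    rw [mem_image] at this
    obtain ⟨i0, hi0, hM0⟩ := this
    rw [mem_range] at hi0
    by_cases h : i0 = n
    · exact ⟨0, by omega, by rw [← hcyc, ← h]; exact hM0⟩
    · exact ⟨i0, by omega, hM0⟩
  have hvert : ∃ iv, iv < n ∧ (c iv).1 = (c (iv + 1)).1 ∧ (c iv).1 = M := by
    obtain ⟨i1, hi1, hM1⟩ := hMmem
    by_cases hv1 : (c i1).1 = (c (i1 + 1)).1
    · exact ⟨i1, hi1, hv1, hM1⟩
    · set prev : ℕ := if i1 = 0 then n - 1 else i1 - 1 with hprevdef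
      have hprevn : prev < n := by
        by_cases h0 : i1 = 0 <;> simp [hprevdef, h0] <;> omega
      have hprev1 : c (prev + 1) = c i1 := by
        by_cases h0 : i1 = 0
        · have : prev = n - 1 := by simp [hprevdef, h0]
          rw [this, h0]
          have : n - 1 + 1 = n := by omega
          rw [this, hcyc]
        · have : prev = i1 - 1 := by simp [hprevdef, h0]
          rw [this]
          have : i1 - 1 + 1 = i1 := by omega
          rw [this]
      by_cases hv2 : (c prev).1 = (c (prev + 1)).1
      · refine ⟨prev, hprevn, hv2, ?_⟩
        rw [hv2, hprev1, hM1]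
      · exfalso
        -- both edges at c i1 are horizontal
        have hA : c (i1 + 1) = ((c i1).1 - 1, (c i1).2) := by
          rcases mem_dB1_iff.mp (hstep i1 hi1) with h' | h' | h' | h'
          · exfalso
            have hle : (c (i1 + 1)).1 ≤ M := hM (i1 + 1) (by omega)
            have : (c (i1 + 1)).1 = (c i1).1 + 1 := by rw [h']
            omega
          · exact h'
          · exfalso; apply hv1; rw [h']
          · exfalso; apply hv1; rw [h']
        have hB : c prev = ((c i1).1 - 1, (c i1).2) := by
          rcases mem_dB1_iff.mp (hstep prev hprevn) with h' | h' | h' | h'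
          · -- c (prev+1) = (c prev .1 + 1, _): c i1 = ...
            rw [hprev1] at h'
            have e1 : (c i1).1 = (c prev).1 + 1 := by rw [h']
            have e2 : (c i1).2 = (c prev).2 := by rw [h']
            apply Prod.ext <;> omega
          · exfalso
            rw [hprev1] at h'
            have e1 : (c i1).1 = (c prev).1 - 1 := by rw [h']
            have hle : (c prev).1 ≤ M := hM prev (by omega)
            omega
          · exfalso; apply hv2; rw [hprev1] at h' ⊢; rw [h']
          · exfalso; apply hv2; rw [hprev1] at h' ⊢; rw [h']
        have hBA : c prev = c (i1 + 1) := by rw [hA, hB]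
        set j : ℕ := if i1 + 1 = n then 0 else i1 + 1 with hjdef
        have hjn : j < n := by
          by_cases h0 : i1 + 1 = n <;> simp [hjdef, h0] <;> omega
        have hcj : c j = c (i1 + 1) := by
          by_cases h0 : i1 + 1 = n
          · simp only [hjdef, if_pos h0]
            rw [h0, hcyc]
          · simp [hjdef, h0]
        have := hinj prev hprevn j hjn (by rw [hcj]; exact hBA)
        have hprev' : prev = if i1 = 0 then n - 1 else i1 - 1 := hprevdef
        have hj' : j = if i1 + 1 = n then 0 else i1 + 1 := hjdef
        split_ifs at hprev' hj' <;> omega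
  obtain ⟨iv, hiv, hvv, hvM⟩ := hvert
  set k : ℤ := min (c iv).2 (c (iv + 1)).2 with hkdef
  set x1 : ℝ × ℝ := ((M : ℝ) - 2⁻¹, (k : ℝ) + 2⁻¹) with hx1def
  have hx1 : x1 ∉ tildeGamma γ := by
    intro h
    rcases tg_coord h with ⟨z, hz⟩ | ⟨z, hz⟩
    · have h2 : ((M - z : ℤ) : ℝ) = 2⁻¹ := by
        push_cast
        have : x1.1 = (M : ℝ) - 2⁻¹ := rfl
        rw [this] at hz
        linarith
      have h3 : (0 : ℝ) < ((M - z : ℤ) : ℝ) := by rw [h2]; norm_num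
      have h4 : ((M - z : ℤ) : ℝ) < 1 := by rw [h2]; norm_num
      have h3' : (0 : ℤ) < M - z := by exact_mod_cast h3
      have h4' : (M - z : ℤ) < 1 := by exact_mod_cast h4
      omega
    · have h2 : ((z - k : ℤ) : ℝ) = 2⁻¹ := by
        push_cast
        have : x1.2 = (k : ℝ) + 2⁻¹ := rfl
        rw [this] at hz
        linarith
      have h3 : (0 : ℝ) < ((z - k : ℤ) : ℝ) := by rw [h2]; norm_num
      have h4 : ((z - k : ℤ) : ℝ) < 1 := by rw [h2]; norm_num
      have h3' : (0 : ℤ) < z - k := by exact_mod_cast h3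
      have h4' : (z - k : ℤ) < 1 := by exact_mod_cast h4
      omega
  have inj' : ∀ a, a ≤ n → ∀ b, b ≤ n → c a = c b →
      a = b ∨ (a = 0 ∧ b = n) ∨ (a = n ∧ b = 0) := by
    intro a ha b hb h
    by_cases han : a = n <;> by_cases hbn : b = n
    · left; rw [han, hbn]
    · right; right
      refine ⟨han, ?_⟩
      have : c 0 = c b := by rw [← hcyc, ← han]; exact h
      exact (hinj 0 (by omega) b (by omega) this).symm
    · right; left
      refine ⟨?_, hbn⟩
      have : c a = c 0 := by rw [h, hbn, hcyc]
      exact hinj a (by omega) 0 (by omega) this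
    · left; exact hinj a (by omega) b (by omega) h
  have hf1 : fpar c n x1 = 1 := by
    have hterm : ∀ i ∈ range n,
        (if (c i).1 = (c (i + 1)).1 ∧ x1.1 < ((c i).1 : ℝ) ∧
            ((min (c i).2 (c (i + 1)).2 : ℤ) : ℝ) ≤ x1.2 ∧
            x1.2 < ((min (c i).2 (c (i + 1)).2 : ℤ) : ℝ) + 1
          then (1 : ZMod 2) else 0) = if i = iv then (1 : ZMod 2) else 0 := by
      intro i hi
      rw [mem_range] at hi
      by_cases hiiv : i = iv
      · rw [if_pos hiiv, if_pos]
        subst hiiv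
        refine ⟨hvv, ?_, ?_, ?_⟩
        · have : x1.1 = (M : ℝ) - 2⁻¹ := rfl
          rw [this, hvM]
          norm_num
        · have h1 : x1.2 = (k : ℝ) + 2⁻¹ := rfl
          rw [h1, ← hkdef]
          norm_num
        · have h1 : x1.2 = (k : ℝ) + 2⁻¹ := rfl
          rw [h1, ← hkdef]
          norm_num
      · rw [if_neg hiiv, if_neg]
        rintro ⟨hv', hs, hy1, hy2⟩
        -- derive (c i).1 = M
        have hsx : x1.1 = (M : ℝ) - 2⁻¹ := rfl
        rw [hsx] at hs
        have hMi : (c i).1 = M := by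
          have hle : (c i).1 ≤ M := hM i hi.le
          have h1 : ((M - 1 : ℤ) : ℝ) < ((c i).1 : ℝ) := by push_cast; linarith
          have h2 : (M - 1 : ℤ) < (c i).1 := by exact_mod_cast h1
          omega
        set L : ℤ := min (c i).2 (c (i + 1)).2 with hLdef
        have hsy : x1.2 = (k : ℝ) + 2⁻¹ := rfl
        rw [hsy] at hy1 hy2
        have hLk : L = k := by
          have h1 : L ≤ k := by
            by_contra hcc
            push_neg at hcc
            have : ((k + 1 : ℤ) : ℝ) ≤ (L : ℝ) := by exact_mod_cast hcc
            push_cast at this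
            linarith
          have h2 : k ≤ L := by
            by_contra hcc
            push_neg at hcc
            have : ((L + 1 : ℤ) : ℝ) ≤ (k : ℝ) := by exact_mod_cast (by omega : L + 1 ≤ k)
            push_cast at this
            linarith
          omega
        -- both edges are the vertical segment {(M,k),(M,k+1)}
        have hedge : ∀ j, j < n → (c j).1 = (c (j + 1)).1 → (c j).1 = M →
            min (c j).2 (c (j + 1)).2 = k →
            (c j = (M, k) ∧ c (j + 1) = (M, k + 1)) ∨
            (c j = (M, k + 1) ∧ c (j + 1) = (M, k)) := by
          intro j hj hvj hMj hkj
          rcases mem_dB1_iff.mp (hstep j hj) with h' | h' | h' | h'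
          · exfalso
            have : (c (j + 1)).1 = (c j).1 + 1 := by rw [h']
            omega
          · exfalso
            have : (c (j + 1)).1 = (c j).1 - 1 := by rw [h']
            omega
          · left
            have e1 : (c (j + 1)).1 = (c j).1 := by rw [h']
            have e2 : (c (j + 1)).2 = (c j).2 + 1 := by rw [h']
            have hj2 : (c j).2 = k := by omega
            constructor
            · apply Prod.ext <;> simp [hMj, hj2]
            · apply Prod.ext <;> omega
          · right
            have e1 : (c (j + 1)).1 = (c j).1 := by rw [h']
            have e2 : (c (j + 1)).2 = (c j).2 - 1 := by rw [h']
            have hj2 : (c j).2 = k + 1 := by omega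
            constructor
            · apply Prod.ext <;> simp [hMj, hj2]
            · apply Prod.ext <;> omega
        have hei := hedge i hi hv' hMi hLk
        have heiv := hedge iv hiv hvv hvM rfl
        rcases hei with ⟨ha1, ha2⟩ | ⟨ha1, ha2⟩ <;> rcases heiv with ⟨hb1, hb2⟩ | ⟨hb1, hb2⟩
        · exact hiiv (hinj i hi iv hiv (by rw [ha1, hb1]))
        · have h1 := inj' i hi.le (iv + 1) (by omega) (by rw [ha1, hb2])
          have h2 := inj' (i + 1) (by omega) iv hiv.le (by rw [ha2, hb1])
          omega
        · have h1 := inj' i hi.le (iv + 1) (by omega) (by rw [ha1, hb2])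
          have h2 := inj' (i + 1) (by omega) iv hiv.le (by rw [ha2, hb1])
          omega
        · exact hiiv (hinj i hi iv hiv (by rw [ha1, hb1]))
    rw [fpar, Finset.sum_congr rfl hterm, Finset.sum_ite_eq' (range n) iv fun _ => (1 : ZMod 2),
      if_pos (mem_range.mpr hiv)]
  -- assemble
  intro H
  have hall : ∀ x : ℝ × ℝ, x ∉ tildeGamma γ → ∃ δ : ℝ, 0 < δ ∧
      ∀ z : ℝ × ℝ, |z.1 - x.1| < δ → |z.2 - x.2| < δ → fpar c n z = fpar c n x :=
    fun x hx => loc_const c n (by omega) hstep hcyc hx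
  choose δf hδ1 hδ2 using hall
  set V0 : Set (ℝ × ℝ) :=
    ⋃ (x : ℝ × ℝ) (h : x ∉ tildeGamma γ ∧ fpar c n x = 0), Metric.ball x (δf x h.1) with hV0
  set V1 : Set (ℝ × ℝ) :=
    ⋃ (x : ℝ × ℝ) (h : x ∉ tildeGamma γ ∧ fpar c n x = 1), Metric.ball x (δf x h.1) with hV1
  have ho0 : IsOpen V0 := isOpen_iUnion fun x => isOpen_iUnion fun h => Metric.isOpen_ball
  have ho1 : IsOpen V1 := isOpen_iUnion fun x => isOpen_iUnion fun h => Metric.isOpen_ball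
  have hcover : (tildeGamma γ)ᶜ ⊆ V0 ∪ V1 := by
    intro y hy
    have h01 : fpar c n y = 0 ∨ fpar c n y = 1 := by
      have : ∀ v : ZMod 2, v = 0 ∨ v = 1 := by decide
      exact this _
    rcases h01 with h | h
    · left
      exact Set.mem_iUnion.mpr ⟨y, Set.mem_iUnion.mpr ⟨⟨hy, h⟩, Metric.mem_ball_self (hδ1 y hy)⟩⟩
    · right
      exact Set.mem_iUnion.mpr ⟨y, Set.mem_iUnion.mpr ⟨⟨hy, h⟩, Metric.mem_ball_self (hδ1 y hy)⟩⟩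
  have hball_val : ∀ (x : ℝ × ℝ) (h : x ∉ tildeGamma γ) (w : ℝ × ℝ),
      w ∈ Metric.ball x (δf x h) → fpar c n w = fpar c n x := by
    intro x h w hw
    rw [Metric.mem_ball] at hw
    rw [Prod.dist_eq] at hw
    have h1 : dist w.1 x.1 < δf x h := lt_of_le_of_lt le_sup_left hw
    have h2 : dist w.2 x.2 < δf x h := lt_of_le_of_lt le_sup_right hw
    rw [Real.dist_eq] at h1 h2
    exact hδ2 x h w h1 h2
  obtain ⟨w, hwU, hw0, hw1⟩ := H V0 V1 ho0 ho1 hcover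
    ⟨x0, hx0, Set.mem_iUnion.mpr ⟨x0, Set.mem_iUnion.mpr
      ⟨⟨hx0, hf0⟩, Metric.mem_ball_self (hδ1 x0 hx0)⟩⟩⟩
    ⟨x1, hx1, Set.mem_iUnion.mpr ⟨x1, Set.mem_iUnion.mpr
      ⟨⟨hx1, hf1⟩, Metric.mem_ball_self (hδ1 x1 hx1)⟩⟩⟩
  obtain ⟨y0, hy0⟩ := Set.mem_iUnion.mp hw0
  obtain ⟨hc0, hb0⟩ := Set.mem_iUnion.mp hy0
  obtain ⟨y1, hy1⟩ := Set.mem_iUnion.mp hw1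
  obtain ⟨hc1, hb1⟩ := Set.mem_iUnion.mp hy1
  have hv0 : fpar c n w = 0 := (hball_val y0 hc0.1 w hb0).trans hc0.2
  have hv1 : fpar c n w = 1 := (hball_val y1 hc1.1 w hb1).trans hc1.2
  rw [hv0] at hv1
  exact absurd hv1 (by decide)

/-- If two diagonal (opposite) vertices of a unit square both lie in the interior component
`Int(γ) = Int(γ̃) ∩ ℤ²` determined by a simple circuit `γ` containing no unit square, then at
least one of their two common axis-neighbours also lies in `Int(γ)`. -/
theorem stmt17 (c : ℕ → ℤ × ℤ) (n : ℕ) (hn : 4 ≤ n) (h : IsSimpleCircuit c n)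
    (γ : Set (ℤ × ℤ)) (hγ : γ = c '' {k | k ≤ n})
    (hsq : ¬ ∃ a b : ℤ, {((a, b) : ℤ × ℤ), (a + 1, b), (a + 1, b + 1), (a, b + 1)} ⊆ γ)
    (A B : Set (ℝ × ℝ)) (hAB : A ∪ B = (tildeGamma γ)ᶜ) (hd : Disjoint A B)
    (hAconn : IsConnected A) (hBconn : IsConnected B)
    (hAbd : Bornology.IsBounded A) (hBbd : ¬ Bornology.IsBounded B)
    (p q : ℤ × ℤ) (hdiag : q ∈ dB2 p)
    (hp : toR2 p ∈ A) (hq : toR2 q ∈ A) :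
    toR2 (p.1, q.2) ∈ A ∨ toR2 (q.1, p.2) ∈ A := by
  obtain ⟨⟨hstep, hcyc⟩, hinj, hsimple⟩ := h
  subst hγ
  have hq' : (q.1 = p.1 + 1 ∨ q.1 = p.1 - 1) ∧ (q.2 = p.2 + 1 ∨ q.2 = p.2 - 1) := by
    simp only [dB2, Set.mem_insert_iff, Set.mem_singleton_iff, Prod.ext_iff, true_and, and_true] at hdiag
    omega
  have hpU : toR2 p ∈ (tildeGamma (c '' {k | k ≤ n}))ᶜ := by rw [← hAB]; exact Or.inl hp
  have hqU : toR2 q ∈ (tildeGamma (c '' {k | k ≤ n}))ᶜ := by rw [← hAB]; exact Or.inl hq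
  have hpγ : p ∉ c '' {k | k ≤ n} := fun hc => hpU (mem_tg_left hc)
  have hqγ : q ∉ c '' {k | k ≤ n} := fun hc => hqU (mem_tg_left hc)
  have hr_db1 : ((p.1, q.2) : ℤ × ℤ) ∈ dB1 p := by
    simp only [dB1, Set.mem_insert_iff, Set.mem_singleton_iff, Prod.mk.injEq, true_and, and_true]
    omega
  have hs_db1 : ((q.1, p.2) : ℤ × ℤ) ∈ dB1 p := by
    simp only [dB1, Set.mem_insert_iff, Set.mem_singleton_iff, Prod.mk.injEq, true_and, and_true]
    omega
  have hr_db2_s : ((p.1, q.2) : ℤ × ℤ) ∈ dB2 ((q.1, p.2) : ℤ × ℤ) := by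
    simp only [dB2, Set.mem_insert_iff, Set.mem_singleton_iff, Prod.mk.injEq, true_and, and_true]
    omega
  have hs_db2_r : ((q.1, p.2) : ℤ × ℤ) ∈ dB2 ((p.1, q.2) : ℤ × ℤ) := by
    simp only [dB2, Set.mem_insert_iff, Set.mem_singleton_iff, Prod.mk.injEq, true_and, and_true]
    omega
  have hcommon : ∀ t : ℤ × ℤ, t ∈ dB1 ((p.1, q.2) : ℤ × ℤ) → t ∈ dB1 ((q.1, p.2) : ℤ × ℤ) →
      t = p ∨ t = q := by
    intro t h1 h2
    simp only [dB1, Set.mem_insert_iff, Set.mem_singleton_iff, Prod.ext_iff, true_and, and_true] at h1 h2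
    rw [Prod.ext_iff, Prod.ext_iff]
    omega
  have hrs : ((p.1, q.2) : ℤ × ℤ) ≠ ((q.1, p.2) : ℤ × ℤ) := by
    intro hcon
    rw [Prod.ext_iff] at hcon
    omega
  by_cases hrA : toR2 (p.1, q.2) ∈ A
  · exact Or.inl hrA
  by_cases hsA : toR2 (q.1, p.2) ∈ A
  · exact Or.inr hsA
  exfalso
  have hBcase : ∀ w : ℤ × ℤ, w ∈ dB1 p → toR2 w ∈ B → False := by
    intro w hw hB
    have hwU : toR2 w ∈ (tildeGamma (c '' {k | k ≤ n}))ᶜ := by rw [← hAB]; exact Or.inr hB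
    have hwγ : w ∉ c '' {k | k ≤ n} := fun hc => hwU (mem_tg_left hc)
    have hseg : segment ℝ (toR2 p) (toR2 w) ⊆ (tildeGamma (c '' {k | k ≤ n}))ᶜ :=
      fun x hx => seg_avoid hpγ hwγ hw hx
    have hpre1 : IsPreconnected (A ∪ segment ℝ (toR2 p) (toR2 w)) :=
      IsPreconnected.union (toR2 p) hp (left_mem_segment ℝ _ _) hAconn.isPreconnected
        (convex_segment _ _).isPreconnected
    have hpre2 : IsPreconnected ((A ∪ segment ℝ (toR2 p) (toR2 w)) ∪ B) :=
      IsPreconnected.union (toR2 w) (Or.inr (right_mem_segment ℝ _ _)) hB hpre1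
        hBconn.isPreconnected
    have heq : (A ∪ segment ℝ (toR2 p) (toR2 w)) ∪ B = (tildeGamma (c '' {k | k ≤ n}))ᶜ := by
      apply Set.Subset.antisymm
      · rintro x ((hx | hx) | hx)
        · rw [← hAB]; exact Or.inl hx
        · exact hseg hx
        · rw [← hAB]; exact Or.inr hx
      · intro x hx
        rw [← hAB] at hx
        rcases hx with hx | hx
        · exact Or.inl (Or.inl hx)
        · exact Or.inr hx
    rw [heq] at hpre2
    exact not_preconn c n hn hstep hcyc hinj hpre2
  have hmem : ∀ w : ℤ × ℤ, toR2 w ∉ A → toR2 w ∈ B ∨ w ∈ c '' {k | k ≤ n} := by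
    intro w hwA
    by_cases hh : toR2 w ∈ tildeGamma (c '' {k | k ≤ n})
    · exact Or.inr (tg_lattice hh)
    · have : toR2 w ∈ A ∪ B := by rw [hAB]; exact hh
      rcases this with h' | h'
      · exact absurd h' hwA
      · exact Or.inl h'
  rcases hmem _ hrA with hrB | hrγ
  · exact hBcase _ hr_db1 hrB
  rcases hmem _ hsA with hsB | hsγ
  · exact hBcase _ hs_db1 hsB
  have getIdx : ∀ w : ℤ × ℤ, w ∈ c '' {k | k ≤ n} → ∃ i, i < n ∧ c i = w := by
    rintro w ⟨i, hi, rfl⟩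
    simp only [Set.mem_setOf_eq] at hi
    by_cases hh : i = n
    · exact ⟨0, by omega, by rw [← hcyc, ← hh]⟩
    · exact ⟨i, by omega, rfl⟩
  obtain ⟨i, hi, hci⟩ := getIdx _ hrγ
  obtain ⟨j, hj, hcj⟩ := getIdx _ hsγ
  have hij : i ≠ j := fun hcon => hrs (by rw [← hci, hcon, hcj])
  have hfin : ∀ a, a < n → (c a = p ∨ c a = q) → False := by
    rintro a ha (hc | hc)
    · exact hpγ ⟨a, by simp only [Set.mem_setOf_eq]; omega, hc⟩
    · exact hqγ ⟨a, by simp only [Set.mem_setOf_eq]; omega, hc⟩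
  rcases lt_or_gt_of_ne hij with hlt | hgt
  · obtain ⟨_, hmm⟩ := hsimple i j hlt (le_of_lt hj) (by rw [hci, hcj]; exact hr_db2_s)
    rw [hci, hcj] at hmm
    exact hfin (i + 1) (by omega) (hcommon _ hmm.1 hmm.2)
  · obtain ⟨_, hmm⟩ := hsimple j i hgt (le_of_lt hi) (by rw [hci, hcj]; exact hs_db2_r)
    rw [hci, hcj] at hmm
    exact hfin (j + 1) (by omega) (hcommon _ hmm.2 hmm.1)
end
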